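/- For any bypass (α,u) in Q, the subgroup T_{<(α,u)} is a normal subgroup of T_{≤(α,u)}. Moreover, if (a_1,v_1) < ⋯ < (a_N,v_N) is the increasing sequence of all bypasses in Q, then T_{<(a_1,v_1)} is trivial, T_{<(a_i,v_i)} = T_{≤(a_{i-1},v_{i-1})} for i ≥ 2, and T_{≤(a_i,v_i)} = T_{(a_i,v_i)} T_{(a_{i-1},v_{i-1})} ⋯ T_{(a_1,v_1)} for every i. -/

import Mathlib

attribute [local instance] Classical.propDecidable

/-- A quiver given by a set of vertices, a set of arrows and source/target maps. -/
structure Quiv where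
  V : Type
  A : Type
  s : A → V
  t : A → V

namespace Quiv

section Basic

variable (Q : Quiv)

/-- A (nontrivial) path is a nonempty list of composable arrows, listed in the
order they are traversed. -/
def IsPath (p : List Q.A) : Prop :=
  p ≠ [] ∧ p.Chain' (fun a b => Q.t a = Q.s b)

/-- Source of a nonempty list of arrows. -/
def src (p : List Q.A) : Option Q.V := p.head?.map Q.s

/-- Target of a nonempty list of arrows. -/
def tgt (p : List Q.A) : Option Q.V := p.getLast?.map Q.t

/-- `Q` has no oriented cycle: no nontrivial path has equal source and target. -/
def NoCycle : Prop := ∀ p, Q.IsPath p → Q.src p ≠ Q.tgt p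

/-- `Q` has no multiple arrows: distinct arrows never have both the same source
and the same target. -/
def NoMultipleArrows : Prop :=
  ∀ a b : Q.A, Q.s a = Q.s b → Q.t a = Q.t b → a = b

/-- A bypass `(α, u)`: `u` is a path parallel to the arrow `α` and distinct from it. -/
def IsBypass (α : Q.A) (u : List Q.A) : Prop :=
  Q.IsPath u ∧ Q.src u = some (Q.s α) ∧ Q.tgt u = some (Q.t α) ∧ u ≠ [α]

/-- `Repl n u v` : `v` is obtained from `u` by replacing `n` of its arrows (at
increasing positions) by bypass paths. -/
inductive Repl : ℕ → List Q.A → List Q.A → Prop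
  | nil : Repl 0 [] []
  | keep (a : Q.A) {n : ℕ} {u v : List Q.A} : Repl n u v → Repl n (a :: u) (a :: v)
  | repl {a : Q.A} {p : List Q.A} {n : ℕ} {u v : List Q.A} :
      Q.IsBypass a p → Repl n u v → Repl (n + 1) (a :: u) (p ++ v)

/-- `v` is derived of `u` of order `t`. -/
def DerivedOfOrder (t : ℕ) (u v : List Q.A) : Prop := 1 ≤ t ∧ Q.Repl t u v

/-- `v` is derived of `u` (of some order `t ≥ 1`). -/
def Derived (u v : List Q.A) : Prop := ∃ t, Q.DerivedOfOrder t u v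

/-- `W(α)` : the number of bypasses of the form `(α, u)`. -/
noncomputable def Wa (α : Q.A) : ℕ := Nat.card {u : List Q.A // Q.IsBypass α u}

/-- `W(u)` for a path `u = α_n ⋯ α_1` : the sum of the `W(α_i)`. -/
noncomputable def Wp (u : List Q.A) : ℕ := (u.map Q.Wa).sum

/-- A linear order `<` on the nontrivial paths of `Q` refining the `W`-ordering and
compatible with concatenation, as in Le Meur's Definition 2.5. -/
structure PathOrder where
  lt : List Q.A → List Q.A → Prop
  irrefl : ∀ p, Q.IsPath p → ¬ lt p p
  trans' : ∀ p q r, lt p q → lt q r → lt p r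
  total' : ∀ p q, Q.IsPath p → Q.IsPath q → p ≠ q → lt p q ∨ lt q p
  wlt : ∀ p q, Q.IsPath p → Q.IsPath q → Q.Wp p < Q.Wp q → lt p q
  concat : ∀ u u' v v' : List Q.A, lt v u → lt v' u' →
    Q.IsPath (v ++ v') → Q.IsPath (u ++ u') → lt (v ++ v') (u ++ u')

end Basic

/-- Lexicographic (strict) order on bypasses: `(α,u) < (β,v)` iff `α < β`, or
`α = β` and `u < v`. -/
def PathOrder.bplt {Q : Quiv} (o : Q.PathOrder) (b c : Q.A × List Q.A) : Prop :=
  o.lt [b.1] [c.1] ∨ (b.1 = c.1 ∧ o.lt b.2 c.2)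

/-- Lexicographic non-strict order on bypasses. -/
def PathOrder.bple {Q : Quiv} (o : Q.PathOrder) (b c : Q.A × List Q.A) : Prop :=
  o.bplt b c ∨ b = c

section Linear

variable (Q : Quiv) (k : Type) [Field k]

/-- Concatenation product on the free `k`-module on lists of arrows (the morphism
spaces of the path category `kQ`). -/
noncomputable def mulF (f g : List Q.A →₀ k) : List Q.A →₀ k :=
  f.sum fun p c => g.sum fun q d => Finsupp.single (p ++ q) (c * d)

/-- Image of the arrow `a` under the transvection `φ_{α,u,τ}`. -/
noncomputable def arrowImg (α : Q.A) (u : List Q.A) (τ : k) (a : Q.A) : List Q.A →₀ k :=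
  if a = α then Finsupp.single [a] 1 + τ • Finsupp.single u 1 else Finsupp.single [a] 1

/-- Image of a path under the transvection `φ_{α,u,τ}`. -/
noncomputable def substPoly (α : Q.A) (u : List Q.A) (τ : k) : List Q.A → (List Q.A →₀ k)
  | [] => Finsupp.single [] 1
  | a :: rest => mulF Q k (arrowImg Q k α u τ a) (substPoly α u τ rest)

/-- The transvection `φ_{α,u,τ}` as a linear endomorphism of `kQ` : it is the
`k`-linear automorphism of `kQ` fixing every vertex, sending `α` to `α + τ u`, and
fixing every other arrow. -/
noncomputable def substMap (α : Q.A) (u : List Q.A) (τ : k) :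
    Module.End k (List Q.A →₀ k) :=
  Finsupp.linearCombination k (substPoly Q k α u τ)

/-- `ψ` lies in the group `T` generated by the transvections, i.e. it is a finite
product of transvections. -/
def MemT (ψ : Module.End k (List Q.A →₀ k)) : Prop :=
  ∃ L : List (Q.A × List Q.A × k),
    (∀ x ∈ L, Q.IsBypass x.1 x.2.1) ∧
    ψ = (L.map fun x => substMap Q k x.1 x.2.1 x.2.2).prod

/-- `r'` is a subexpression of `r`. -/
def Subexpr (r' r : List Q.A →₀ k) : Prop :=
  r'.support ⊆ r.support ∧ ∀ p ∈ r'.support, r' p = r p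

/-- A minimal relation of `I` : a nonzero `r ∈ I` such that `0` and `r` are the only
subexpressions of `r` lying in `I`. -/
def IsMinimalRel (I : Submodule k (List Q.A →₀ k)) (r : List Q.A →₀ k) : Prop :=
  r ∈ I ∧ r ≠ 0 ∧ ∀ r', Subexpr Q k r' r → r' ∈ I → r' = 0 ∨ r' = r

/-- `ReplExp g u v c` : `v` is obtained from the path `u` by replacing some of its
arrows `a` (at increasing positions) by paths `w ∈ supp(g a)`, `w ≠ a`, and `c` is
the product of the corresponding coefficients `w^*(g a)`. -/
inductive ReplExp (g : Q.A → (List Q.A →₀ k)) : List Q.A → List Q.A → k → Prop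
  | nil : ReplExp g [] [] 1
  | keep (a : Q.A) {u v : List Q.A} {c : k} :
      ReplExp g u v c → ReplExp g (a :: u) (a :: v) c
  | repl (a : Q.A) {w u v : List Q.A} {c : k} :
      w ∈ (g a).support → w ≠ [a] → ReplExp g u v c →
      ReplExp g (a :: u) (w ++ v) ((g a) w * c)

/-- The homotopy relation `∼_I` on walks. A walk is a list of pairs `(a, d)` where
`a` is an arrow and `d` is `true` for `a` and `false` for the formal inverse `a⁻¹`;
the relation is the smallest equivalence relation compatible with concatenation,
cancelling `a a⁻¹` and `a⁻¹ a`, and identifying any two paths lying in the support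
of a minimal relation of `I`. -/
inductive Homotopic (I : Submodule k (List Q.A →₀ k)) :
    List (Q.A × Bool) → List (Q.A × Bool) → Prop
  | refl (w : List (Q.A × Bool)) : Homotopic I w w
  | symm {w w' : List (Q.A × Bool)} : Homotopic I w w' → Homotopic I w' w
  | trans {w w' w'' : List (Q.A × Bool)} :
      Homotopic I w w' → Homotopic I w' w'' → Homotopic I w w''
  | cancel (a : Q.A) : Homotopic I [(a, true), (a, false)] []
  | cancel' (a : Q.A) : Homotopic I [(a, false), (a, true)] []
  | rel {r : List Q.A →₀ k} (hr : IsMinimalRel Q k I r) {u v : List Q.A}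
      (hu : u ∈ r.support) (hv : v ∈ r.support) :
      Homotopic I (u.map fun a => (a, true)) (v.map fun a => (a, true))
  | congr (w x : List (Q.A × Bool)) {v v' : List (Q.A × Bool)} :
      Homotopic I v v' → Homotopic I (w ++ v ++ x) (w ++ v' ++ x)

/-- `I` is a monomial admissible ideal of `kQ` : every element is a combination of
paths of length `≥ 2`, membership is detected on supports (monomiality), and `I`
is stable under concatenation with paths on either side. -/
def IsMonomialAdmissible (I : Submodule k (List Q.A →₀ k)) : Prop :=
  (∀ r ∈ I, ∀ p ∈ (r : List Q.A →₀ k).support, Q.IsPath p ∧ 2 ≤ p.length) ∧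
  (∀ r : List Q.A →₀ k, (∀ p ∈ r.support, Finsupp.single p (1 : k) ∈ I) → r ∈ I) ∧
  (∀ r ∈ I, ∀ p ∈ (r : List Q.A →₀ k).support, Finsupp.single p (1 : k) ∈ I) ∧
  (∀ p q : List Q.A, Q.IsPath p → Finsupp.single q (1 : k) ∈ I → Q.IsPath (p ++ q) →
    Finsupp.single (p ++ q) (1 : k) ∈ I) ∧
  (∀ p q : List Q.A, Finsupp.single p (1 : k) ∈ I → Q.IsPath q → Q.IsPath (p ++ q) →
    Finsupp.single (p ++ q) (1 : k) ∈ I)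

/-- A `k`-linear automorphism of `kQ` (fixing the vertices) is the transvection
`φ_{α,u,τ}` when its underlying linear map is `substMap α u τ`. -/
def IsTransvectionE (ψ : (List Q.A →₀ k) ≃ₗ[k] (List Q.A →₀ k))
    (α : Q.A) (u : List Q.A) (τ : k) : Prop :=
  (ψ : (List Q.A →₀ k) →ₗ[k] (List Q.A →₀ k)) = substMap Q k α u τ

/-- The subgroup `T_{<(α,u)}` generated by the transvections `φ_{β,v,τ}` with
`(β,v) < (α,u)`. -/
noncomputable def TltSub (o : Q.PathOrder) (b : Q.A × List Q.A) :
    Subgroup ((List Q.A →₀ k) ≃ₗ[k] (List Q.A →₀ k)) :=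
  Subgroup.closure
    {ψ | ∃ β v τ, Q.IsBypass β v ∧ o.bplt (β, v) b ∧ IsTransvectionE Q k ψ β v τ}

/-- The subgroup `T_{≤(α,u)}` generated by the transvections `φ_{β,v,τ}` with
`(β,v) ≤ (α,u)`. -/
noncomputable def TleSub (o : Q.PathOrder) (b : Q.A × List Q.A) :
    Subgroup ((List Q.A →₀ k) ≃ₗ[k] (List Q.A →₀ k)) :=
  Subgroup.closure
    {ψ | ∃ β v τ, Q.IsBypass β v ∧ o.bple (β, v) b ∧ IsTransvectionE Q k ψ β v τ}

/-- The set `T_{(α,u)} = {φ_{α,u,τ} | τ ∈ k}`. -/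
def TsingleSet (b : Q.A × List Q.A) :
    Set ((List Q.A →₀ k) ≃ₗ[k] (List Q.A →₀ k)) :=
  {ψ | ∃ τ : k, IsTransvectionE Q k ψ b.1 b.2 τ}

/-- `m` is the `<`-maximum of the support of `r`. -/
def IsMaxPath (o : Q.PathOrder) (r : List Q.A →₀ k) (m : List Q.A) : Prop :=
  m ∈ r.support ∧ ∀ p ∈ r.support, p ≠ m → o.lt p m

/-- `B` is the Gröbner basis of the subspace `F` with respect to the path order `o` :
`B` spans `F` and each `r ∈ B` has a leading path `m` (with coefficient `1`, all other
paths of `supp r` being `<`-smaller) whose coefficient in every other element of `B`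
vanishes. -/
def IsGB (o : Q.PathOrder) (F : Submodule k (List Q.A →₀ k))
    (B : Set (List Q.A →₀ k)) : Prop :=
  B ⊆ (F : Set (List Q.A →₀ k)) ∧ Submodule.span k B = F ∧
  ∀ r ∈ B, ∃ m, m ∈ (r : List Q.A →₀ k).support ∧ r m = 1 ∧
    (∀ p ∈ (r : List Q.A →₀ k).support, p ≠ m → o.lt p m) ∧
    ∀ r' ∈ B, r' ≠ r → (r' : List Q.A →₀ k) m = 0

end Linear

section Dev

open Finsupp

variable {Q : Quiv} {k : Type} [Field k]

/-! ### Algebra of the concatenation product -/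

lemma mulF_single_left (p : List Q.A) (c : k) (g : List Q.A →₀ k) :
    mulF Q k (Finsupp.single p c) g = g.sum fun q d => Finsupp.single (p ++ q) (c * d) := by
  unfold mulF
  exact Finsupp.sum_single_index (by simp [Finsupp.sum])

lemma mulF_single_single (p q : List Q.A) (c d : k) :
    mulF Q k (Finsupp.single p c) (Finsupp.single q d) = Finsupp.single (p ++ q) (c * d) := by
  rw [mulF_single_left]
  exact Finsupp.sum_single_index (by simp)

lemma mulF_zero_left (g : List Q.A →₀ k) : mulF Q k 0 g = 0 := by
  simp [mulF]

lemma mulF_zero_right (f : List Q.A →₀ k) : mulF Q k f 0 = 0 := by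
  simp [mulF]

lemma mulF_add_left (f f' g : List Q.A →₀ k) :
    mulF Q k (f + f') g = mulF Q k f g + mulF Q k f' g := by
  unfold mulF
  exact Finsupp.sum_add_index' (by simp [Finsupp.sum])
    (by intro p c₁ c₂; simp [add_mul, Finsupp.single_add, Finsupp.sum_add])

lemma mulF_add_right (f g g' : List Q.A →₀ k) :
    mulF Q k f (g + g') = mulF Q k f g + mulF Q k f g' := by
  unfold mulF
  rw [← Finsupp.sum_add]
  exact Finsupp.sum_congr fun p _ => Finsupp.sum_add_index' (by simp)
    (by intro q d₁ d₂; simp [mul_add, Finsupp.single_add])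

lemma mulF_smul_left (c : k) (f g : List Q.A →₀ k) :
    mulF Q k (c • f) g = c • mulF Q k f g := by
  unfold mulF
  rw [Finsupp.sum_smul_index (by simp [Finsupp.sum]), Finsupp.smul_sum]
  refine Finsupp.sum_congr fun p _ => ?_
  rw [Finsupp.smul_sum]
  exact Finsupp.sum_congr fun q _ => by rw [Finsupp.smul_single, smul_eq_mul, mul_assoc]

lemma mulF_smul_right (c : k) (f g : List Q.A →₀ k) :
    mulF Q k f (c • g) = c • mulF Q k f g := by
  unfold mulF
  rw [Finsupp.smul_sum]
  refine Finsupp.sum_congr fun p b => ?_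
  rw [Finsupp.sum_smul_index (by simp), Finsupp.smul_sum]
  exact Finsupp.sum_congr fun q d => by
    rw [Finsupp.smul_single, smul_eq_mul, mul_left_comm]

lemma mulF_assoc (f g h : List Q.A →₀ k) :
    mulF Q k (mulF Q k f g) h = mulF Q k f (mulF Q k g h) := by
  induction f using Finsupp.induction_linear with
  | zero => simp [mulF_zero_left]
  | add f f' hf hf' => simp [mulF_add_left, hf, hf']
  | single p c =>
    induction g using Finsupp.induction_linear with
    | zero => simp [mulF_zero_left, mulF_zero_right]
    | add g g' hg hg' => simp [mulF_add_left, mulF_add_right, hg, hg']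
    | single q d =>
      induction h using Finsupp.induction_linear with
      | zero => simp [mulF_zero_right]
      | add h h' hh hh' => simp [mulF_add_right, hh, hh']
      | single r e =>
        rw [mulF_single_single, mulF_single_single, mulF_single_single, mulF_single_single,
          mul_assoc, List.append_assoc]

lemma mulF_one (f : List Q.A →₀ k) : mulF Q k f (Finsupp.single [] 1) = f := by
  induction f using Finsupp.induction_linear with
  | zero => simp [mulF_zero_left]
  | add f f' hf hf' => simp [mulF_add_left, hf, hf']
  | single p c => simp [mulF_single_single]

lemma one_mulF (f : List Q.A →₀ k) : mulF Q k (Finsupp.single [] 1) f = f := by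
  induction f using Finsupp.induction_linear with
  | zero => simp [mulF_zero_right]
  | add f f' hf hf' => simp [mulF_add_right, hf, hf']
  | single p c => simp [mulF_single_single]

lemma mulF_support {f g : List Q.A →₀ k} {w : List Q.A} (hw : w ∈ (mulF Q k f g).support) :
    ∃ p ∈ f.support, ∃ q ∈ g.support, w = p ++ q := by
  unfold mulF at hw
  rcases Finset.mem_biUnion.1 (Finsupp.support_sum hw) with ⟨p, hp, hw2⟩
  rcases Finset.mem_biUnion.1 (Finsupp.support_sum hw2) with ⟨q, hq, hw3⟩
  exact ⟨p, hp, q, hq, Finset.mem_singleton.1 (Finsupp.support_single_subset hw3)⟩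

lemma mulF_single_left_apply (p : List Q.A) (c : k) (g : List Q.A →₀ k) (x : List Q.A) :
    mulF Q k (Finsupp.single p c) g (p ++ x) = c * g x := by
  classical
  rw [mulF_single_left, Finsupp.sum_apply]
  have : ∀ q (d : k), (Finsupp.single (p ++ q) (c * d) : List Q.A →₀ k) (p ++ x)
      = if q = x then c * d else 0 := by
    intro q d
    rw [Finsupp.single_apply]
    congr 1
    simp [List.append_right_inj]
  rw [Finsupp.sum, Finset.sum_congr rfl fun q _ => this q (g q), Finset.sum_ite_eq' g.support x]
  by_cases hx : x ∈ g.support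
  · rw [if_pos hx]
  · rw [if_neg hx, Finsupp.notMem_support_iff.1 hx, mul_zero]

lemma mulF_single_left_apply_of_ne (p : List Q.A) (c : k) (g : List Q.A →₀ k)
    (w : List Q.A) (h : ∀ q, w ≠ p ++ q) :
    mulF Q k (Finsupp.single p c) g w = 0 := by
  classical
  rw [mulF_single_left, Finsupp.sum_apply, Finsupp.sum]
  refine Finset.sum_eq_zero fun q _ => ?_
  rw [Finsupp.single_apply, if_neg fun hh => h q hh.symm]

/-! ### Substitution maps -/

variable (Q k) in
lemma substPoly_cons (α : Q.A) (u : List Q.A) (τ : k) (a : Q.A) (p : List Q.A) :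
    substPoly Q k α u τ (a :: p) = mulF Q k (arrowImg Q k α u τ a) (substPoly Q k α u τ p) :=
  rfl

variable (Q k) in
lemma substPoly_nil (α : Q.A) (u : List Q.A) (τ : k) :
    substPoly Q k α u τ [] = Finsupp.single [] 1 := rfl

variable (Q k) in
lemma substPoly_arrow (α : Q.A) (u : List Q.A) (τ : k) (a : Q.A) :
    substPoly Q k α u τ [a] = arrowImg Q k α u τ a := by
  rw [substPoly_cons, substPoly_nil, mulF_one]

variable (Q k) in
lemma substPoly_append (α : Q.A) (u : List Q.A) (τ : k) (p q : List Q.A) :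
    substPoly Q k α u τ (p ++ q) =
      mulF Q k (substPoly Q k α u τ p) (substPoly Q k α u τ q) := by
  induction p with
  | nil => rw [List.nil_append, substPoly_nil, one_mulF]
  | cons a p ih => rw [List.cons_append, substPoly_cons, substPoly_cons, ih, mulF_assoc]

variable (Q k) in
lemma substPoly_not_mem {α : Q.A} (u : List Q.A) (τ : k) {p : List Q.A} (h : α ∉ p) :
    substPoly Q k α u τ p = Finsupp.single p 1 := by
  induction p with
  | nil => rfl
  | cons a p ih =>
    have ha : a ≠ α := fun hh => h (hh ▸ List.mem_cons_self)
    rw [substPoly_cons, arrowImg, if_neg ha, ih (fun hh => h (List.mem_cons_of_mem a hh)),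
      mulF_single_single, one_mul, List.singleton_append]

variable (Q k) in
lemma substMap_single (α : Q.A) (u : List Q.A) (τ : k) (p : List Q.A) (c : k) :
    substMap Q k α u τ (Finsupp.single p c) = c • substPoly Q k α u τ p := by
  rw [substMap, Finsupp.linearCombination_single]

variable (Q k) in
lemma substMap_fixed {α : Q.A} (u : List Q.A) (τ : k) {x : List Q.A →₀ k}
    (h : ∀ p ∈ x.support, α ∉ p) : substMap Q k α u τ x = x := by
  rw [substMap, Finsupp.linearCombination_apply]
  have : ∀ p ∈ x.support, x p • substPoly Q k α u τ p = Finsupp.single p (x p) := by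
    intro p hp
    rw [substPoly_not_mem Q k u τ (h p hp), Finsupp.smul_single, smul_eq_mul, mul_one]
  rw [Finsupp.sum_congr this, Finsupp.sum_single]

/-- The property of being multiplicative with respect to concatenation. -/
def IsMulHomP (f : (List Q.A →₀ k) →ₗ[k] (List Q.A →₀ k)) : Prop :=
  f (Finsupp.single [] 1) = Finsupp.single [] 1 ∧
    ∀ x y, f (mulF Q k x y) = mulF Q k (f x) (f y)

lemma isMulHomP_id : IsMulHomP (LinearMap.id : (List Q.A →₀ k) →ₗ[k] _) := ⟨rfl, fun _ _ => rfl⟩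

lemma IsMulHomP.comp {f g : (List Q.A →₀ k) →ₗ[k] (List Q.A →₀ k)}
    (hf : IsMulHomP f) (hg : IsMulHomP g) : IsMulHomP (f ∘ₗ g) := by
  refine ⟨?_, fun x y => ?_⟩
  · simp only [LinearMap.comp_apply, hg.1, hf.1]
  · simp only [LinearMap.comp_apply, hg.2, hf.2]

variable (Q k) in
lemma substMap_isMulHomP (α : Q.A) (u : List Q.A) (τ : k) :
    IsMulHomP (substMap Q k α u τ) := by
  constructor
  · rw [substMap_single, substPoly_nil, one_smul]
  · intro x y
    induction x using Finsupp.induction_linear with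
    | zero => simp [mulF_zero_left]
    | add f f' hf hf' => simp only [mulF_add_left, map_add, hf, hf']
    | single p c =>
      induction y using Finsupp.induction_linear with
      | zero => simp [mulF_zero_right]
      | add g g' hg hg' => simp only [mulF_add_right, map_add, hg, hg']
      | single q d =>
        rw [mulF_single_single, substMap_single, substMap_single, substMap_single,
          substPoly_append, mulF_smul_left, mulF_smul_right, smul_smul]

lemma isMulHomP_ext {f g : (List Q.A →₀ k) →ₗ[k] (List Q.A →₀ k)}
    (hf : IsMulHomP f) (hg : IsMulHomP g)
    (h : ∀ a : Q.A, f (Finsupp.single [a] 1) = g (Finsupp.single [a] 1)) : f = g := by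
  have key : ∀ p : List Q.A, f (Finsupp.single p 1) = g (Finsupp.single p 1) := by
    intro p
    induction p with
    | nil => rw [hf.1, hg.1]
    | cons a p ih =>
      have : (Finsupp.single (a :: p) 1 : List Q.A →₀ k)
          = mulF Q k (Finsupp.single [a] 1) (Finsupp.single p 1) := by
        rw [mulF_single_single, one_mul, List.singleton_append]
      rw [this, hf.2, hg.2, h, ih]
  refine Finsupp.lhom_ext fun p c => ?_
  have : (Finsupp.single p c : List Q.A →₀ k) = c • Finsupp.single p 1 := by
    rw [Finsupp.smul_single, smul_eq_mul, mul_one]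
  rw [this, map_smul, map_smul, key]

variable (Q k) in
lemma substMap_zero (α : Q.A) (u : List Q.A) :
    substMap Q k α u 0 = LinearMap.id := by
  refine isMulHomP_ext (substMap_isMulHomP Q k α u 0) isMulHomP_id fun a => ?_
  rw [substMap_single, one_smul, substPoly_arrow, LinearMap.id_apply]
  unfold arrowImg
  split <;> simp

variable (Q k) in
lemma substMap_comp_same (α : Q.A) {u : List Q.A} (h : α ∉ u) (τ σ : k) :
    substMap Q k α u τ ∘ₗ substMap Q k α u σ = substMap Q k α u (τ + σ) := by
  refine isMulHomP_ext ((substMap_isMulHomP Q k α u τ).comp (substMap_isMulHomP Q k α u σ))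
    (substMap_isMulHomP Q k α u (τ + σ)) fun a => ?_
  rw [LinearMap.comp_apply, substMap_single, one_smul, substPoly_arrow, substMap_single,
    one_smul, substPoly_arrow]
  unfold arrowImg
  by_cases ha : a = α
  · subst ha
    rw [if_pos rfl, if_pos rfl, map_add, map_smul, substMap_single, one_smul, substPoly_arrow]
    have hu : substMap Q k a u τ (Finsupp.single u 1) = Finsupp.single u 1 := by
      rw [substMap_single, substPoly_not_mem Q k u τ h, one_smul]
    unfold arrowImg
    rw [if_pos rfl, hu, add_smul]
    abel
  · rw [if_neg ha, if_neg ha, substMap_single, one_smul, substPoly_arrow]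
    unfold arrowImg
    rw [if_neg ha]

/-- The transvection as a linear automorphism. -/
noncomputable def tvE (α : Q.A) {u : List Q.A} (h : α ∉ u) (τ : k) :
    (List Q.A →₀ k) ≃ₗ[k] (List Q.A →₀ k) :=
  LinearEquiv.ofLinear (substMap Q k α u τ) (substMap Q k α u (-τ))
    (by rw [substMap_comp_same Q k α h]; simp [substMap_zero])
    (by rw [substMap_comp_same Q k α h]; simp [substMap_zero])

lemma tvE_toLinearMap (α : Q.A) {u : List Q.A} (h : α ∉ u) (τ : k) :
    (tvE α h τ : (List Q.A →₀ k) →ₗ[k] (List Q.A →₀ k)) = substMap Q k α u τ := rfl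

lemma isTransvectionE_tvE (α : Q.A) {u : List Q.A} (h : α ∉ u) (τ : k) :
    IsTransvectionE Q k (tvE α h τ) α u τ := rfl

lemma isTransvectionE_iff {ψ : (List Q.A →₀ k) ≃ₗ[k] (List Q.A →₀ k)}
    {α : Q.A} {u : List Q.A} (h : α ∉ u) (τ : k) :
    IsTransvectionE Q k ψ α u τ ↔ ψ = tvE α h τ := by
  constructor
  · intro hψ
    exact LinearEquiv.toLinearMap_injective hψ
  · rintro rfl; rfl

lemma coe_mulE (e₁ e₂ : (List Q.A →₀ k) ≃ₗ[k] (List Q.A →₀ k)) :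
    (↑(e₁ * e₂) : (List Q.A →₀ k) →ₗ[k] (List Q.A →₀ k)) =
      (↑e₁ : (List Q.A →₀ k) →ₗ[k] (List Q.A →₀ k)) ∘ₗ
      (↑e₂ : (List Q.A →₀ k) →ₗ[k] (List Q.A →₀ k)) := rfl

lemma tvE_inv (α : Q.A) {u : List Q.A} (h : α ∉ u) (τ : k) :
    (tvE α h τ)⁻¹ = tvE (k := k) α h (-τ) := by
  apply LinearEquiv.toLinearMap_injective
  rfl

lemma tvE_mul (α : Q.A) {u : List Q.A} (h : α ∉ u) (τ σ : k) :
    tvE (k := k) α h τ * tvE α h σ = tvE α h (τ + σ) := by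
  apply LinearEquiv.toLinearMap_injective
  rw [coe_mulE, tvE_toLinearMap, tvE_toLinearMap, tvE_toLinearMap,
    substMap_comp_same Q k α h]

lemma tvE_zero (α : Q.A) {u : List Q.A} (h : α ∉ u) :
    tvE (k := k) α h 0 = 1 := by
  apply LinearEquiv.toLinearMap_injective
  rw [tvE_toLinearMap, substMap_zero]; rfl

lemma prod_toLinearMap (l : List ((List Q.A →₀ k) ≃ₗ[k] (List Q.A →₀ k))) :
    (l.prod : (List Q.A →₀ k) →ₗ[k] (List Q.A →₀ k))
      = (l.map LinearEquiv.toLinearMap).prod := by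
  induction l with
  | nil => rfl
  | cons e l ih =>
    rw [List.prod_cons, List.map_cons, List.prod_cons, coe_mulE, ih, Module.End.mul_eq_comp]

/-! ### Path combinatorics -/

lemma src_cons (a : Q.A) (p : List Q.A) : Q.src (a :: p) = some (Q.s a) := rfl

lemma tgt_singleton (a : Q.A) : Q.tgt [a] = some (Q.t a) := rfl

lemma tgt_append_right (p : List Q.A) {q : List Q.A} (h : q ≠ []) :
    Q.tgt (p ++ q) = Q.tgt q := by
  unfold Quiv.tgt
  rw [List.getLast?_append]
  cases hq : q.getLast? with
  | none => exact absurd (List.getLast?_eq_none_iff.1 hq) h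
  | some x => rfl

lemma tgt_cons {a : Q.A} {p : List Q.A} (h : p ≠ []) : Q.tgt (a :: p) = Q.tgt p := by
  have : a :: p = [a] ++ p := rfl
  rw [this, tgt_append_right _ h]

lemma src_append_left {p : List Q.A} (q : List Q.A) (h : p ≠ []) :
    Q.src (p ++ q) = Q.src p := by
  cases p with
  | nil => exact absurd rfl h
  | cons a p => rfl

lemma src_some {p : List Q.A} (h : p ≠ []) :
    ∃ a, p.head? = some a ∧ Q.src p = some (Q.s a) := by
  cases p with
  | nil => exact absurd rfl h
  | cons a p => exact ⟨a, rfl, rfl⟩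

lemma tgt_some {p : List Q.A} (h : p ≠ []) :
    ∃ a, p.getLast? = some a ∧ Q.tgt p = some (Q.t a) := by
  refine ⟨p.getLast h, List.getLast?_eq_getLast h, ?_⟩
  unfold Quiv.tgt
  rw [List.getLast?_eq_getLast h]
  rfl

lemma isPath_glue {p q : List Q.A} (hp : Q.IsPath p) (hq : Q.IsPath q)
    (h : Q.tgt p = Q.src q) : Q.IsPath (p ++ q) := by
  refine ⟨by simp [hp.1], List.isChain_append.2 ⟨hp.2, hq.2, ?_⟩⟩
  intro x hx y hy
  rw [Option.mem_def] at hx hy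
  obtain ⟨a, ha, ha'⟩ := tgt_some hp.1
  obtain ⟨b, hb, hb'⟩ := src_some hq.1
  obtain rfl : x = a := by rw [hx] at ha; exact Option.some.inj ha
  obtain rfl : y = b := by rw [hy] at hb; exact Option.some.inj hb
  have hh : some (Q.t x) = some (Q.s y) := by rw [← ha', ← hb', h]
  exact Option.some.inj hh

lemma split_side_facts {α : Q.A} {u p q : List Q.A} {β : Q.A}
    (h : Q.IsBypass α u) (hu : u = p ++ β :: q) :
    ((p = [] ∧ Q.s β = Q.s α) ∨
      (Q.IsPath p ∧ Q.src p = some (Q.s α) ∧ Q.tgt p = some (Q.s β))) ∧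
    ((q = [] ∧ Q.t β = Q.t α) ∨
      (Q.IsPath q ∧ Q.src q = some (Q.t β) ∧ Q.tgt q = some (Q.t α))) := by
  subst hu
  have hch := h.1.2
  rw [List.Chain', List.isChain_append] at hch
  obtain ⟨hc1, hc2, hlink⟩ := hch
  constructor
  · by_cases hp : p = []
    · subst hp
      refine Or.inl ⟨rfl, ?_⟩
      have h2 := h.2.1
      rw [List.nil_append, src_cons] at h2
      exact Option.some.inj h2
    · right
      obtain ⟨a, ha, ha'⟩ := tgt_some (p := p) hp
      refine ⟨⟨hp, hc1⟩, ?_, ?_⟩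
      · rw [← src_append_left (β :: q) hp]; exact h.2.1
      · have hl := hlink a (Option.mem_def.2 ha) β (Option.mem_def.2 rfl)
        rw [ha', hl]
  · by_cases hq : q = []
    · subst hq
      refine Or.inl ⟨rfl, ?_⟩
      have h2 := h.2.2.1
      rw [tgt_append_right p (by simp : ([β] : List Q.A) ≠ []), tgt_singleton] at h2
      exact Option.some.inj h2
    · right
      refine ⟨⟨hq, hc2.tail⟩, ?_, ?_⟩
      · obtain ⟨b, hb, hb'⟩ := src_some hq
        have hl := (List.isChain_cons.1 hc2).1 b (Option.mem_def.2 hb)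
        rw [hb', ← hl]
      · rw [← tgt_cons (a := β) hq, ← tgt_append_right p (by simp : β :: q ≠ [])]
        exact h.2.2.1

lemma replace_path {l₁ l₂ : List Q.A} {γ : Q.A} {w : List Q.A}
    (hv : (l₁ ++ γ :: l₂).Chain' (fun a b => Q.t a = Q.s b)) (hw : Q.IsPath w)
    (hsrc : Q.src w = some (Q.s γ)) (htgt : Q.tgt w = some (Q.t γ)) :
    (l₁ ++ w ++ l₂).Chain' (fun a b => Q.t a = Q.s b) ∧
    Q.src (l₁ ++ w ++ l₂) = Q.src (l₁ ++ γ :: l₂) ∧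
    Q.tgt (l₁ ++ w ++ l₂) = Q.tgt (l₁ ++ γ :: l₂) := by
  rw [List.Chain', List.isChain_append] at hv
  obtain ⟨hc1, hc2, hlink⟩ := hv
  obtain ⟨hw0, hwa, hwa'⟩ := src_some hw.1
  obtain ⟨wl, hwl, hwl'⟩ := tgt_some hw.1
  have hsγ : Q.s hw0 = Q.s γ := by rw [hwa'] at hsrc; exact Option.some.inj hsrc
  have htγ : Q.t wl = Q.t γ := by rw [hwl'] at htgt; exact Option.some.inj htgt
  have hchain : (l₁ ++ (w ++ l₂)).Chain' (fun a b => Q.t a = Q.s b) := by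
    rw [List.Chain', List.isChain_append]
    refine ⟨hc1, ?_, ?_⟩
    · rw [List.isChain_append]
      refine ⟨hw.2, hc2.tail, ?_⟩
      intro x hx y hy
      rw [Option.mem_def] at hx hy
      obtain rfl : x = wl := by rw [hx] at hwl; exact Option.some.inj hwl
      have hl := (List.isChain_cons.1 hc2).1 y (Option.mem_def.2 hy)
      rw [htγ]; exact hl
    · intro x hx y hy
      rw [Option.mem_def] at hx hy
      rw [List.head?_append, hwa] at hy
      obtain rfl : y = hw0 := by
        have h9 : (some hw0).or l₂.head? = some hw0 := rfl
        rw [h9] at hy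
        exact (Option.some.inj hy).symm
      have hl := hlink x (Option.mem_def.2 hx) γ (Option.mem_def.2 rfl)
      rw [hl, hsγ]
  refine ⟨by rw [List.append_assoc]; exact hchain, ?_, ?_⟩
  · by_cases hl : l₁ = []
    · subst hl
      rw [List.nil_append, List.nil_append, src_append_left l₂ hw.1, hwa', hsγ, src_cons]
    · rw [List.append_assoc, src_append_left _ hl, src_append_left _ hl]
  · by_cases hl : l₂ = []
    · subst hl
      simp only [List.append_nil]
      rw [tgt_append_right l₁ hw.1, tgt_append_right l₁ (by simp : ([γ] : List Q.A) ≠ []),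
        hwl', htγ, tgt_singleton]
    · rw [List.append_assoc, tgt_append_right l₁ (by simp [hl]), tgt_append_right w hl,
        tgt_append_right l₁ (by simp : γ :: l₂ ≠ []), tgt_cons hl]

lemma bypass_head_ne (hnc : Q.NoCycle) {γ : Q.A} {w : List Q.A} (hw : Q.IsBypass γ w) :
    w.head? ≠ some γ := by
  intro hh
  cases w with
  | nil => simp at hh
  | cons a rest =>
    obtain rfl : a = γ := by simpa using hh
    cases rest with
    | nil => exact hw.2.2.2 rfl
    | cons b r =>
      have hch := hw.1.2
      have hlink : Q.t a = Q.s b := (List.isChain_cons_cons.1 hch).1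
      refine hnc (b :: r) ⟨List.cons_ne_nil _ _, (List.isChain_cons_cons.1 hch).2⟩ ?_
      have h2 : Q.tgt (b :: r) = some (Q.t a) := by
        rw [← tgt_cons (a := a) (List.cons_ne_nil _ _)]
        exact hw.2.2.1
      rw [src_cons, ← hlink, h2]

lemma bypass_not_mem (hnc : Q.NoCycle) {α : Q.A} {u : List Q.A} (h : Q.IsBypass α u) :
    α ∉ u := by
  intro hm
  rcases List.append_of_mem hm with ⟨l₁, l₂, rfl⟩
  obtain ⟨hside, -⟩ := split_side_facts h rfl
  rcases hside with ⟨rfl, -⟩ | ⟨hp, hsrc, htgt⟩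
  · exact bypass_head_ne hnc h rfl
  · exact hnc l₁ hp (by rw [hsrc, htgt])

lemma bypass_two_le (hnm : Q.NoMultipleArrows) {α : Q.A} {u : List Q.A}
    (h : Q.IsBypass α u) : 2 ≤ u.length := by
  cases u with
  | nil => exact absurd rfl h.1.1
  | cons a rest =>
    cases rest with
    | cons b r => simp
    | nil =>
      exfalso
      have h1 : Q.s a = Q.s α := Option.some.inj h.2.1
      have h2 : Q.t a = Q.t α := Option.some.inj h.2.2.1
      exact h.2.2.2 (by rw [hnm a α h1 h2])

lemma bypass_disjoint (hnc : Q.NoCycle) (hnm : Q.NoMultipleArrows) {α β : Q.A}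
    {u v : List Q.A} (hαu : Q.IsBypass α u) (hβv : Q.IsBypass β v) (hne : α ≠ β) :
    β ∉ u ∨ α ∉ v := by
  by_contra hcon
  push_neg at hcon
  obtain ⟨hβu, hαv⟩ := hcon
  rcases List.append_of_mem hβu with ⟨p, q, hu⟩
  rcases List.append_of_mem hαv with ⟨r, w, hv⟩
  obtain ⟨hP, hQ⟩ := split_side_facts hαu hu
  obtain ⟨hR, hW⟩ := split_side_facts hβv hv
  rcases hP with ⟨hp0, hpe⟩ | ⟨hp, hps, hpt⟩
  · rcases hR with ⟨hr0, hre⟩ | ⟨hr, hrs, hrt⟩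
    swap
    · exact hnc r hr (by rw [hrs, hrt, hpe])
    · -- p = [], r = [] : look at the target sides
      rcases hQ with ⟨hq0, hqe⟩ | ⟨hq, hqs, hqt⟩
      · -- u = [β], parallel arrows
        exact hne (hnm α β hpe.symm hqe.symm)
      · rcases hW with ⟨hw0, hwe⟩ | ⟨hw, hws, hwt⟩
        · exact hnc q hq (by rw [hqs, hqt, hwe])
        · exact hnc (q ++ w) (isPath_glue hq hw (by rw [hqt, hws]))
            (by rw [src_append_left _ hq.1, tgt_append_right _ hw.1, hqs, hwt])
  · rcases hR with ⟨hr0, hre⟩ | ⟨hr, hrs, hrt⟩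
    · exact hnc p hp (by rw [hps, hpt, hre])
    · exact hnc (p ++ r) (isPath_glue hp hr (by rw [hpt, hrs]))
        (by rw [src_append_left _ hp.1, tgt_append_right _ hr.1, hps, hrt])


/-! ### Finiteness and the counting lemma -/

lemma path_length_le [Fintype Q.V] (hnc : Q.NoCycle) {p : List Q.A} (hp : Q.IsPath p) :
    p.length ≤ Fintype.card Q.V := by
  have key : ∀ i j : Fin p.length, i.1 < j.1 → Q.s p[i.1] ≠ Q.s p[j.1] := by
    intro i j hlt hij
    set sl := (p.drop i.1).take (j.1 - i.1) with hsl
    have hi : i.1 < p.length := i.2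
    have hj : j.1 < p.length := j.2
    have hlen : sl.length = j.1 - i.1 := by
      simp only [hsl, List.length_take, List.length_drop]
      omega
    have hne : sl ≠ [] := by
      intro h0
      rw [h0] at hlen
      simp at hlen
      omega
    have hget : ∀ m (hm : m < sl.length), sl[m]'hm = p[i.1 + m]'(by omega) := by
      intro m hm
      simp only [hsl, List.getElem_take, List.getElem_drop]
    refine hnc sl ⟨hne, (hp.2.drop i.1).take _⟩ ?_
    have hhead : sl.head? = some (sl[0]'(by omega)) := by
      rw [List.head?_eq_getElem?, List.getElem?_eq_getElem]
    have hlast : sl.getLast? = some (sl[sl.length - 1]'(by omega)) := by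
      rw [List.getLast?_eq_getElem?, List.getElem?_eq_getElem]
    have hchain : Q.t (p[j.1 - 1]'(by omega)) = Q.s (p[j.1]'hj) := by
      have := List.isChain_iff_getElem.1 hp.2 (j.1 - 1) (by omega)
      simpa [List.get_eq_getElem, Nat.sub_add_cancel (by omega : 1 ≤ j.1)] using this
    unfold Quiv.src Quiv.tgt
    rw [hhead, hlast]
    have e1 : sl[0]'(by omega) = p[i.1]'hi := by
      rw [hget 0 (by omega)]
      simp
    have e2 : sl[sl.length - 1]'(by omega) = p[j.1 - 1]'(by omega) := by
      rw [hget (sl.length - 1) (by omega)]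
      congr 1
      omega
    rw [e1, e2]
    simp only [Option.map_some]
    rw [hchain, ← hij]
  have hinj : Function.Injective fun i : Fin p.length => Q.s p[i.1] := by
    intro i j hij
    rcases lt_trichotomy i.1 j.1 with h | h | h
    · exact absurd hij (key i j h)
    · exact Fin.ext h
    · exact absurd hij.symm (key j i h)
  have := Fintype.card_le_of_injective _ hinj
  rwa [Fintype.card_fin] at this

lemma finite_paths [Fintype Q.V] [Fintype Q.A] (hnc : Q.NoCycle) :
    {p : List Q.A | Q.IsPath p}.Finite :=
  (List.finite_length_le Q.A (Fintype.card Q.V)).subset fun _ hp => path_length_le hnc hp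

lemma finite_bypasses [Fintype Q.V] [Fintype Q.A] (hnc : Q.NoCycle) (γ : Q.A) :
    Finite {w : List Q.A // Q.IsBypass γ w} := by
  have : {w : List Q.A | Q.IsBypass γ w}.Finite :=
    (finite_paths hnc).subset fun w hw => hw.1
  exact this.to_subtype

lemma list_sum_map_fin {α : Type*} (f : α → ℕ) (l : List α) :
    (l.map f).sum = ∑ i : Fin l.length, f (l[i.1]'i.2) := by
  induction l with
  | nil => simp
  | cons a l ih =>
    clear ih
    have he : (a :: l).map f = List.ofFn fun i : Fin (a :: l).length => f ((a :: l)[i.1]'i.2) := by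
      apply List.ext_getElem
      · simp
      · intro n h1 h2
        simp
    rw [he, List.sum_ofFn]

lemma Wp_lt_Wa [Fintype Q.V] [Fintype Q.A] (hnc : Q.NoCycle) (hnm : Q.NoMultipleArrows)
    {β : Q.A} {v : List Q.A} (h : Q.IsBypass β v) : Q.Wp v < Q.Wa β := by
  classical
  have hfin : ∀ γ : Q.A, Finite {w : List Q.A // Q.IsBypass γ w} := finite_bypasses hnc
  -- the replaced path is a bypass of β
  have hv2 : 2 ≤ v.length := bypass_two_le hnm h
  have hrepl : ∀ (i : Fin v.length) (w : List Q.A), Q.IsBypass (v[i.1]'i.2) w →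
      Q.IsBypass β (v.take i.1 ++ w ++ v.drop (i.1 + 1)) := by
    intro i w hw
    have hsplit : v = v.take i.1 ++ (v[i.1]'i.2) :: v.drop (i.1 + 1) := by
      conv_lhs => rw [← List.take_append_drop i.1 v]
      rw [List.drop_eq_getElem_cons i.2]
    have hr := replace_path (l₁ := v.take i.1) (l₂ := v.drop (i.1 + 1))
      (by rw [← hsplit]; exact h.1.2) hw.1 hw.2.1 hw.2.2.1
    have hw2 : 2 ≤ w.length := bypass_two_le hnm hw
    refine ⟨⟨by simp [hw.1.1], hr.1⟩, ?_, ?_, ?_⟩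
    · rw [hr.2.1, ← hsplit]; exact h.2.1
    · rw [hr.2.2, ← hsplit]; exact h.2.2.1
    · intro heq
      have := congrArg List.length heq
      simp only [List.length_append, List.length_take, List.length_drop,
        List.length_cons, List.length_nil] at this
      omega
  haveI : ∀ i : Fin v.length, Fintype {w : List Q.A // Q.IsBypass (v[i.1]'i.2) w} :=
    fun i => @Fintype.ofFinite _ (hfin _)
  let F : ((i : Fin v.length) × {w : List Q.A // Q.IsBypass (v[i.1]'i.2) w}) ⊕ Unit →
      {w : List Q.A // Q.IsBypass β w} := fun x =>
    match x with
    | .inl ⟨i, w, hw⟩ => ⟨v.take i.1 ++ w ++ v.drop (i.1 + 1), hrepl i w hw⟩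
    | .inr _ => ⟨v, h⟩
  -- auxiliary facts
  have hlen : ∀ (i : Fin v.length) (w : List Q.A), Q.IsBypass (v[i.1]'i.2) w →
      (v.take i.1 ++ w ++ v.drop (i.1 + 1)).length = i.1 + w.length + (v.length - (i.1 + 1)) := by
    intro i w hw
    simp only [List.length_append, List.length_take, List.length_drop]
    omega
  have hkey : ∀ (i j : Fin v.length) (w w' : List Q.A) (hw : Q.IsBypass (v[i.1]'i.2) w)
      (hw' : Q.IsBypass (v[j.1]'j.2) w'), i.1 < j.1 →
      v.take i.1 ++ w ++ v.drop (i.1 + 1) ≠ v.take j.1 ++ w' ++ v.drop (j.1 + 1) := by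
    intro i j w w' hw hw' hlt heq
    have hj : j.1 < v.length := j.2
    have htj : v.take j.1 = v.take i.1 ++ ((v.drop i.1).take (j.1 - i.1)) := by
      rw [← List.take_add]
      congr 1
      omega
    obtain ⟨mid, hdi⟩ : ∃ mid, (v.drop i.1).take (j.1 - i.1) = (v[i.1]'i.2) :: mid := by
      rw [List.drop_eq_getElem_cons i.2]
      obtain ⟨m, hm⟩ : ∃ m, j.1 - i.1 = m + 1 := ⟨j.1 - i.1 - 1, by omega⟩
      rw [hm, List.take_succ_cons]
      exact ⟨_, rfl⟩
    rw [htj, hdi] at heq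
    simp only [List.append_assoc, List.cons_append] at heq
    have heq2 := List.append_cancel_left heq
    obtain ⟨w0, hw0, -⟩ := src_some hw.1.1
    have hhead : w.head? = some (v[i.1]'i.2) := by
      have h1 : (w ++ v.drop (i.1 + 1)).head? = some (v[i.1]'i.2) := by rw [heq2]; rfl
      rw [List.head?_append, hw0] at h1
      rw [hw0]
      exact h1
    exact bypass_head_ne hnc hw hhead
  have hFinj : Function.Injective F := by
    rintro (⟨i, w, hw⟩ | u) (⟨j, w', hw'⟩ | u') heq
    · simp only [F, Subtype.mk.injEq] at heq
      have hij : i = j := by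
        rcases lt_trichotomy i.1 j.1 with hlt | hlt | hlt
        · exact absurd heq (hkey i j w w' hw hw' hlt)
        · exact Fin.ext hlt
        · exact absurd heq.symm (hkey j i w' w hw' hw hlt)
      subst hij
      have : w = w' := by
        rw [List.append_assoc, List.append_assoc] at heq
        exact List.append_cancel_right (List.append_cancel_left heq)
      subst this
      rfl
    · exfalso
      simp only [F, Subtype.mk.injEq] at heq
      have := congrArg List.length heq
      rw [hlen i w hw] at this
      have hw2 := bypass_two_le hnm hw
      have : i.1 + w.length + (v.length - (i.1 + 1)) = v.length := this
      have hi := i.2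
      omega
    · exfalso
      simp only [F, Subtype.mk.injEq] at heq
      have := congrArg List.length heq.symm
      rw [hlen j w' hw'] at this
      have hw2 := bypass_two_le hnm hw'
      have hj := j.2
      omega
    · rfl
  haveI := hfin β
  have hcard := Nat.card_le_card_of_injective F hFinj
  rw [Nat.card_sum] at hcard
  have hT : Nat.card ((i : Fin v.length) × {w : List Q.A // Q.IsBypass (v[i.1]'i.2) w})
      = Q.Wp v := by
    rw [Nat.card_eq_fintype_card, Fintype.card_sigma]
    unfold Quiv.Wp
    rw [list_sum_map_fin]
    refine Finset.sum_congr rfl fun i _ => ?_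
    unfold Quiv.Wa
    rw [Nat.card_eq_fintype_card]
  rw [hT, Nat.card_unique] at hcard
  unfold Quiv.Wa
  omega

/-! ### Support analysis of substitution -/

lemma Wp_cons (a : Q.A) (p : List Q.A) : Q.Wp (a :: p) = Q.Wa a + Q.Wp p := by
  unfold Quiv.Wp
  rw [List.map_cons, List.sum_cons]

lemma Wp_append (p q : List Q.A) : Q.Wp (p ++ q) = Q.Wp p + Q.Wp q := by
  unfold Quiv.Wp
  rw [List.map_append, List.sum_append]

lemma src_none {p : List Q.A} : Q.src p = none ↔ p = [] := by
  cases p <;> simp [Quiv.src]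

lemma arrowImg_support {β : Q.A} {v : List Q.A} {σ : k} {a : Q.A} {p : List Q.A}
    (hp : p ∈ (arrowImg Q k β v σ a).support) : p = [a] ∨ (a = β ∧ p = v) := by
  unfold arrowImg at hp
  by_cases ha : a = β
  · rw [if_pos ha] at hp
    have := Finsupp.support_add hp
    rw [Finset.mem_union] at this
    rcases this with h | h
    · exact Or.inl (Finset.mem_singleton.1 (Finsupp.support_single_subset h))
    · refine Or.inr ⟨ha, ?_⟩
      have h2 := Finsupp.support_smul h
      exact Finset.mem_singleton.1 (Finsupp.support_single_subset h2)
  · rw [if_neg ha] at hp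
    exact Or.inl (Finset.mem_singleton.1 (Finsupp.support_single_subset hp))

lemma substPoly_support_facts {β : Q.A} {v : List Q.A} (hβv : Q.IsBypass β v)
    (hWlt : Q.Wp v < Q.Wa β) (σ : k) :
    ∀ u : List Q.A, u.Chain' (fun a b => Q.t a = Q.s b) →
      ∀ w ∈ (substPoly Q k β v σ u).support,
        w.Chain' (fun a b => Q.t a = Q.s b) ∧ Q.src w = Q.src u ∧ Q.tgt w = Q.tgt u ∧
        (∀ γ : Q.A, γ ∉ u → γ ∉ v → γ ∉ w) ∧ (w = u ∨ Q.Wp w < Q.Wp u) := by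
  intro u
  induction u with
  | nil =>
    intro _ w hw
    rw [substPoly_nil] at hw
    obtain rfl : w = [] := Finset.mem_singleton.1 (Finsupp.support_single_subset hw)
    exact ⟨List.isChain_nil, rfl, rfl, fun γ h _ => h, Or.inl rfl⟩
  | cons a rest ih =>
    intro hch w hw
    rw [substPoly_cons] at hw
    obtain ⟨p, hp, q, hq, rfl⟩ := mulF_support hw
    have hq' := ih hch.tail q hq
    obtain ⟨hqch, hqsrc, hqtgt, hqγ, hqor⟩ := hq'
    have hqnil : q = [] ↔ rest = [] := by
      rw [← src_none (Q := Q), ← src_none (Q := Q), hqsrc]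
    rcases arrowImg_support hp with rfl | ⟨rfl, hpv⟩
    · -- p = [a] : w = a :: q
      rw [List.singleton_append]
      have hlink : ∀ y ∈ q.head?, Q.t a = Q.s y := by
        intro y hy
        rw [Option.mem_def] at hy
        have hqne : q ≠ [] := by intro h0; rw [h0] at hy; simp at hy
        have hrne : rest ≠ [] := fun h0 => hqne (hqnil.2 h0)
        obtain ⟨r0, hr0, hr0'⟩ := src_some hrne
        have hy' : Q.src q = some (Q.s y) := by unfold Quiv.src; rw [hy]; rfl
        have : Q.s y = Q.s r0 := by
          rw [hqsrc, hr0'] at hy'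
          exact (Option.some.inj hy').symm
        have hl := (List.isChain_cons.1 hch).1 r0 (Option.mem_def.2 hr0)
        rw [this, ← hl]
      refine ⟨List.isChain_cons.2 ⟨hlink, hqch⟩, rfl, ?_, ?_, ?_⟩
      · by_cases hqe : q = []
        · have hre := hqnil.1 hqe
          subst hqe; subst hre; rfl
        · have hrne : rest ≠ [] := fun h0 => hqe (hqnil.2 h0)
          rw [tgt_cons hqe, tgt_cons hrne, hqtgt]
      · intro γ hγu hγv hmem
        rcases List.mem_cons.1 hmem with rfl | hmem
        · exact hγu (List.mem_cons_self)
        · exact hqγ γ (fun hh => hγu (List.mem_cons_of_mem _ hh)) hγv hmem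
      · rcases hqor with rfl | hlt
        · exact Or.inl rfl
        · refine Or.inr ?_
          rw [Wp_cons, Wp_cons]
          omega
    · -- a = β and p = v : w = v ++ q
      obtain rfl := hpv.symm
      have hvne := hβv.1.1
      have hlink : ∀ x ∈ v.getLast?, ∀ y ∈ q.head?, Q.t x = Q.s y := by
        intro x hx y hy
        rw [Option.mem_def] at hx hy
        obtain ⟨vl, hvl, hvl'⟩ := tgt_some hvne
        obtain rfl : x = vl := by rw [hx] at hvl; exact Option.some.inj hvl
        have htβ : Q.t x = Q.t a := by
          have := hβv.2.2.1
          rw [hvl'] at this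
          exact Option.some.inj this
        have hqne : q ≠ [] := by intro h0; rw [h0] at hy; simp at hy
        have hrne : rest ≠ [] := fun h0 => hqne (hqnil.2 h0)
        obtain ⟨r0, hr0, hr0'⟩ := src_some hrne
        have hy' : Q.src q = some (Q.s y) := by unfold Quiv.src; rw [hy]; rfl
        have hsy : Q.s y = Q.s r0 := by
          rw [hqsrc, hr0'] at hy'
          exact (Option.some.inj hy').symm
        have hl := (List.isChain_cons.1 hch).1 r0 (Option.mem_def.2 hr0)
        rw [htβ, hsy, ← hl]
      refine ⟨List.isChain_append.2 ⟨hβv.1.2, hqch, hlink⟩, ?_, ?_, ?_, ?_⟩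
      · rw [src_append_left _ hvne, hβv.2.1, src_cons]
      · by_cases hqe : q = []
        · have hre := hqnil.1 hqe
          subst hqe; subst hre
          rw [List.append_nil]
          exact hβv.2.2.1
        · have hrne : rest ≠ [] := fun h0 => hqe (hqnil.2 h0)
          rw [tgt_append_right _ hqe, tgt_cons hrne, hqtgt]
      · intro γ hγu hγv hmem
        rcases List.mem_append.1 hmem with hmem | hmem
        · exact hγv hmem
        · exact hqγ γ (fun hh => hγu (List.mem_cons_of_mem _ hh)) hγv hmem
      · refine Or.inr ?_
        rw [Wp_append, Wp_cons]
        have hle : Q.Wp q ≤ Q.Wp rest := by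
          rcases hqor with rfl | hlt
          · exact le_rfl
          · omega
        omega

lemma substPoly_self_coeff (hnc : Q.NoCycle) {β : Q.A} {v : List Q.A}
    (hβv : Q.IsBypass β v) (σ : k) :
    ∀ u : List Q.A, (substPoly Q k β v σ u) u = 1 := by
  intro u
  induction u with
  | nil => rw [substPoly_nil]; exact Finsupp.single_eq_same
  | cons a rest ih =>
    rw [substPoly_cons]
    unfold arrowImg
    by_cases ha : a = β
    · subst ha
      rw [if_pos rfl, mulF_add_left, Finsupp.add_apply]
      have h1 : mulF Q k (Finsupp.single [a] 1) (substPoly Q k a v σ rest) (a :: rest) = 1 := by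
        have := mulF_single_left_apply (Q := Q) (k := k) [a] 1
          (substPoly Q k a v σ rest) rest
        rw [List.singleton_append] at this
        rw [this, ih, mul_one]
      have h2 : mulF Q k (σ • Finsupp.single v (1:k)) (substPoly Q k a v σ rest)
          (a :: rest) = 0 := by
        rw [Finsupp.smul_single']
        refine mulF_single_left_apply_of_ne _ _ _ _ fun q heq => ?_
        obtain ⟨v0, hv0, -⟩ := src_some hβv.1.1
        have hh : (v ++ q).head? = some a := by rw [← heq]; rfl
        rw [List.head?_append, hv0] at hh
        have : v0 = a := Option.some.inj hh
        exact bypass_head_ne hnc hβv (by rw [hv0, this])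
      rw [h1, h2, add_zero]
    · rw [if_neg ha]
      have := mulF_single_left_apply (Q := Q) (k := k) [a] 1
        (substPoly Q k β v σ rest) rest
      rw [List.singleton_append] at this
      rw [this, ih, mul_one]

/-! ### Products of transvections on a fixed arrow -/

variable (Q k) in
/-- Product of the substitution maps `substMap α w c` over a list of pairs `(w, c)`. -/
noncomputable def substProd (α : Q.A) (L : List (List Q.A × k)) :
    Module.End k (List Q.A →₀ k) :=
  (L.map fun x => substMap Q k α x.1 x.2).prod

lemma isMulHomP_mul {f g : Module.End k (List Q.A →₀ k)}
    (hf : IsMulHomP f) (hg : IsMulHomP g) : IsMulHomP (f * g) := by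
  rw [Module.End.mul_eq_comp]
  exact hf.comp hg

lemma isMulHomP_one : IsMulHomP (1 : Module.End k (List Q.A →₀ k)) := isMulHomP_id

lemma substProd_isMulHomP (α : Q.A) (L : List (List Q.A × k)) :
    IsMulHomP (substProd Q k α L) := by
  induction L with
  | nil => exact isMulHomP_one
  | cons x L ih =>
    unfold substProd at *
    rw [List.map_cons, List.prod_cons]
    exact isMulHomP_mul (substMap_isMulHomP Q k α x.1 x.2) ih

lemma substProd_fixed {α : Q.A} (L : List (List Q.A × k)) {x : List Q.A →₀ k}
    (hx : ∀ p ∈ x.support, α ∉ p) : substProd Q k α L x = x := by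
  induction L with
  | nil => rfl
  | cons y L ih =>
    unfold substProd at *
    rw [List.map_cons, List.prod_cons, Module.End.mul_apply, ih]
    exact substMap_fixed _ _ _ _ hx

lemma substProd_fixed_single {α : Q.A} (L : List (List Q.A × k)) {p : List Q.A} (c : k)
    (h : α ∉ p) : substProd Q k α L (Finsupp.single p c) = Finsupp.single p c :=
  substProd_fixed L fun q hq => by
    rw [Finset.mem_singleton.1 (Finsupp.support_single_subset hq)]; exact h

lemma substProd_arrow {α : Q.A} {L : List (List Q.A × k)} (hL : ∀ x ∈ L, α ∉ x.1) :
    substProd Q k α L (Finsupp.single [α] 1) =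
      Finsupp.single [α] 1 + (L.map fun x => x.2 • Finsupp.single x.1 (1:k)).sum := by
  induction L with
  | nil =>
    rw [List.map_nil, List.sum_nil, add_zero]
    rfl
  | cons y L ih =>
    unfold substProd at *
    rw [List.map_cons, List.prod_cons, Module.End.mul_apply,
      ih (fun x hx => hL x (List.mem_cons_of_mem _ hx)), map_add]
    have h1 : substMap Q k α y.1 y.2 (Finsupp.single [α] 1)
        = Finsupp.single [α] 1 + y.2 • Finsupp.single y.1 1 := by
      rw [substMap_single, one_smul, substPoly_arrow]
      unfold arrowImg
      rw [if_pos rfl]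
    have h2 : substMap Q k α y.1 y.2 ((L.map fun x => x.2 • Finsupp.single x.1 (1:k)).sum)
        = (L.map fun x => x.2 • Finsupp.single x.1 (1:k)).sum := by
      rw [map_list_sum, List.map_map]
      congr 1
      refine List.map_congr_left fun x hx => ?_
      simp only [Function.comp_apply]
      rw [map_smul, substMap_single, one_smul,
        substPoly_not_mem Q k _ _ (hL x (List.mem_cons_of_mem _ hx))]
    rw [h1, h2, List.map_cons, List.sum_cons]
    abel

lemma substMap_arrow_ne {α γ : Q.A} (u : List Q.A) (τ : k) (h : γ ≠ α) :
    substMap Q k α u τ (Finsupp.single [γ] 1) = Finsupp.single [γ] 1 := by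
  rw [substMap_single, one_smul, substPoly_arrow]
  unfold arrowImg
  rw [if_neg h]

lemma substMap_arrow_self (α : Q.A) (u : List Q.A) (τ : k) :
    substMap Q k α u τ (Finsupp.single [α] 1)
      = Finsupp.single [α] 1 + τ • Finsupp.single u 1 := by
  rw [substMap_single, one_smul, substPoly_arrow]
  unfold arrowImg
  rw [if_pos rfl]

lemma substMap_fixed_single {α : Q.A} (u : List Q.A) (τ : k) {p : List Q.A} (c : k)
    (h : α ∉ p) : substMap Q k α u τ (Finsupp.single p c) = Finsupp.single p c := by
  rw [substMap_single, substPoly_not_mem Q k _ _ h, Finsupp.smul_single, smul_eq_mul, mul_one]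

lemma correction_eval {α : Q.A} (R : List Q.A →₀ k) (c : k)
    (hR : ∀ w ∈ R.support, α ∉ w) :
    substProd Q k α (R.support.toList.map fun w => (w, c * R w)) (Finsupp.single [α] 1)
      = Finsupp.single [α] 1 + c • R := by
  classical
  have hL : ∀ x ∈ R.support.toList.map fun w => (w, c * R w), α ∉ x.1 := by
    intro x hx
    rw [List.mem_map] at hx
    obtain ⟨w, hw, rfl⟩ := hx
    exact hR w (Finset.mem_toList.1 hw)
  rw [substProd_arrow hL]
  congr 1
  rw [List.map_map]
  have h1 : ((fun x : List Q.A × k => x.2 • Finsupp.single x.1 (1:k)) ∘ fun w => (w, c * R w))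
      = fun w => c • Finsupp.single w (R w) := by
    funext w
    simp only [Function.comp_apply]
    rw [Finsupp.smul_single', Finsupp.smul_single', mul_one]
  rw [h1, Finset.sum_map_toList R.support fun w => c • Finsupp.single w (R w), ← Finset.smul_sum]
  congr 1
  conv_rhs => rw [← Finsupp.sum_single R]
  rfl

/-! ### The conjugation formula -/

lemma conj_formula [Fintype Q.V] [Fintype Q.A] (hnc : Q.NoCycle) (hnm : Q.NoMultipleArrows)
    {α β : Q.A} {u v : List Q.A} (hαu : Q.IsBypass α u) (hβv : Q.IsBypass β v) (τ σ : k) :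
    ∃ L₁ L₂ : List (List Q.A × k),
      (∀ x ∈ L₁, Q.IsBypass α x.1 ∧ Q.Wp x.1 < Q.Wp u) ∧
      (∀ x ∈ L₂, Q.IsBypass β x.1 ∧ Q.Wp x.1 < Q.Wp v) ∧
      substMap Q k α u τ * substMap Q k β v σ * substMap Q k α u (-τ)
        = substProd Q k α L₁ * (substMap Q k β v σ * substProd Q k β L₂) := by
  classical
  have hαu' : α ∉ u := bypass_not_mem hnc hαu
  have hβv' : β ∉ v := bypass_not_mem hnc hβv
  have hmul3 : IsMulHomP (substMap Q k α u τ * substMap Q k β v σ * substMap Q k α u (-τ)) :=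
    isMulHomP_mul (isMulHomP_mul (substMap_isMulHomP Q k α u τ)
      (substMap_isMulHomP Q k β v σ)) (substMap_isMulHomP Q k α u (-τ))
  by_cases hab : α = β
  · -- same arrow : everything commutes
    subst hab
    refine ⟨[], [], by simp, by simp, ?_⟩
    have h0 : substProd Q k α [] = 1 := rfl
    rw [h0, one_mul, mul_one]
    refine isMulHomP_ext hmul3 (substMap_isMulHomP Q k α v σ) fun γ => ?_
    rw [Module.End.mul_apply, Module.End.mul_apply]
    have fσu : substMap Q k α v σ (Finsupp.single u 1) = Finsupp.single u 1 :=
      substMap_fixed_single _ _ _ hαu'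
    have fτv : substMap Q k α u τ (Finsupp.single v 1) = Finsupp.single v 1 :=
      substMap_fixed_single _ _ _ hβv'
    have fτu : substMap Q k α u τ (Finsupp.single u 1) = Finsupp.single u 1 :=
      substMap_fixed_single _ _ _ hαu'
    by_cases hγ : γ = α
    · subst hγ
      simp only [substMap_arrow_self, map_add, map_smul, fσu, fτv, fτu]
      module
    · have g3 : substMap Q k α u (-τ) (Finsupp.single [γ] 1) = Finsupp.single [γ] 1 :=
        substMap_arrow_ne _ _ hγ
      have g2 : substMap Q k α v σ (Finsupp.single [γ] 1) = Finsupp.single [γ] 1 :=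
        substMap_arrow_ne _ _ hγ
      have g1 : substMap Q k α u τ (Finsupp.single [γ] 1) = Finsupp.single [γ] 1 :=
        substMap_arrow_ne _ _ hγ
      rw [g3, g2, g1]
  · have hne : α ≠ β := hab
    rcases bypass_disjoint hnc hnm hαu hβv hne with hβu | hαv
    case neg.inr =>
      -- case (iii) : correction on the `α` side
      set E := substPoly Q k β v σ u with hE
      set R := E - Finsupp.single u 1 with hR
      have hRu : u ∉ R.support := by
        rw [Finsupp.notMem_support_iff, hR, Finsupp.sub_apply,
          substPoly_self_coeff hnc hβv σ u, Finsupp.single_eq_same, sub_self]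
      have hWlt := Wp_lt_Wa hnc hnm hβv
      have hfacts : ∀ w ∈ R.support, Q.IsBypass α w ∧ Q.Wp w < Q.Wp u ∧ α ∉ w := by
        intro w hwR
        have hwne : w ≠ u := fun hh => hRu (hh ▸ hwR)
        have hwE : w ∈ E.support := by
          have h2 := Finsupp.support_sub (hR ▸ hwR)
          rw [Finset.mem_union] at h2
          rcases h2 with h2 | h2
          · exact h2
          · exact absurd (Finset.mem_singleton.1 (Finsupp.support_single_subset h2)) hwne
        obtain ⟨hwch, hwsrc, hwtgt, hwγ, hwor⟩ :=
          substPoly_support_facts hβv hWlt σ u hαu.1.2 w hwE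
        have hαw : α ∉ w := hwγ α hαu' hαv
        have hwnil : w ≠ [] := by
          intro h0
          subst h0
          have h3 : Q.src u = none := by rw [← hwsrc]; rfl
          exact hαu.1.1 (src_none.1 h3)
        refine ⟨⟨⟨hwnil, hwch⟩, by rw [hwsrc]; exact hαu.2.1,
          by rw [hwtgt]; exact hαu.2.2.1,
          fun hh => hαw (hh ▸ List.mem_cons_self)⟩, ?_, hαw⟩
        rcases hwor with rfl | hlt
        · exact absurd rfl hwne
        · exact hlt
      set L₁ := R.support.toList.map fun w => (w, -τ * R w) with hL₁
      refine ⟨L₁, [], ?_, by simp, ?_⟩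
      · intro x hx
        rw [hL₁, List.mem_map] at hx
        obtain ⟨w, hw, rfl⟩ := hx
        rw [Finset.mem_toList] at hw
        exact ⟨(hfacts w hw).1, (hfacts w hw).2.1⟩
      · have hpn : substProd Q k β [] = 1 := rfl
        rw [hpn, mul_one]
        refine isMulHomP_ext hmul3
          (isMulHomP_mul (substProd_isMulHomP α L₁) (substMap_isMulHomP Q k β v σ))
          fun γ => ?_
        rw [Module.End.mul_apply, Module.End.mul_apply, Module.End.mul_apply]
        have hER : E = Finsupp.single u 1 + R := by rw [hR]; abel
        have a2α : substMap Q k β v σ (Finsupp.single [α] 1) = Finsupp.single [α] 1 :=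
          substMap_arrow_ne _ _ hne
        have a2u : substMap Q k β v σ (Finsupp.single u 1) = E := by
          rw [substMap_single, one_smul, hE]
        have a1E : substMap Q k α u τ E = E := by
          rw [hER, map_add, substMap_fixed_single _ _ _ hαu']
          congr 1
          exact substMap_fixed _ _ _ _ fun p hp => (hfacts p hp).2.2
        have pα : substProd Q k α L₁ (Finsupp.single [α] 1)
            = Finsupp.single [α] 1 + (-τ) • R := by
          rw [hL₁]
          exact correction_eval R (-τ) fun w hw => (hfacts w hw).2.2
        have a1u : substMap Q k α u τ (Finsupp.single u 1) = Finsupp.single u 1 :=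
          substMap_fixed_single _ _ _ hαu'
        have a1R : substMap Q k α u τ R = R :=
          substMap_fixed _ _ _ _ fun p hp => (hfacts p hp).2.2
        by_cases hγa : γ = α
        · subst hγa
          simp only [substMap_arrow_self, map_add, map_smul, a2α, a2u, a1E, a1u, a1R, pα, hER]
          module
        · by_cases hγb : γ = β
          · subst hγb
            have b3 : substMap Q k α u (-τ) (Finsupp.single [γ] 1) = Finsupp.single [γ] 1 :=
              substMap_arrow_ne _ _ hγa
            have b1 : substMap Q k α u τ (Finsupp.single [γ] 1) = Finsupp.single [γ] 1 :=
              substMap_arrow_ne _ _ hγa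
            have fτv : substMap Q k α u τ (Finsupp.single v 1) = Finsupp.single v 1 :=
              substMap_fixed_single _ _ _ hαv
            have pβ : substProd Q k α L₁ (Finsupp.single [γ] 1) = Finsupp.single [γ] 1 :=
              substProd_fixed_single L₁ 1 (by
                intro hh
                exact hγa (List.mem_singleton.1 hh).symm)
            have pv : substProd Q k α L₁ (Finsupp.single v 1) = Finsupp.single v 1 :=
              substProd_fixed_single L₁ 1 hαv
            simp only [b3, substMap_arrow_self, map_add, map_smul, b1, fτv, pβ, pv]
          · have g3 : substMap Q k α u (-τ) (Finsupp.single [γ] 1) = Finsupp.single [γ] 1 :=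
              substMap_arrow_ne _ _ hγa
            have g2 : substMap Q k β v σ (Finsupp.single [γ] 1) = Finsupp.single [γ] 1 :=
              substMap_arrow_ne _ _ hγb
            have g1 : substMap Q k α u τ (Finsupp.single [γ] 1) = Finsupp.single [γ] 1 :=
              substMap_arrow_ne _ _ hγa
            have pγ : substProd Q k α L₁ (Finsupp.single [γ] 1) = Finsupp.single [γ] 1 :=
              substProd_fixed_single L₁ 1 (by
                intro hh
                exact hγa (List.mem_singleton.1 hh).symm)
            rw [g3, g2, g1, pγ]
    case neg.inl =>
      -- case (iv) : correction on the `β` side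
      set E := substPoly Q k α u τ v with hE
      set R := E - Finsupp.single v 1 with hR
      have hRv : v ∉ R.support := by
        rw [Finsupp.notMem_support_iff, hR, Finsupp.sub_apply,
          substPoly_self_coeff hnc hαu τ v, Finsupp.single_eq_same, sub_self]
      have hWlt := Wp_lt_Wa hnc hnm hαu
      have hfacts : ∀ w ∈ R.support, Q.IsBypass β w ∧ Q.Wp w < Q.Wp v ∧ β ∉ w := by
        intro w hwR
        have hwne : w ≠ v := fun hh => hRv (hh ▸ hwR)
        have hwE : w ∈ E.support := by
          have h2 := Finsupp.support_sub (hR ▸ hwR)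
          rw [Finset.mem_union] at h2
          rcases h2 with h2 | h2
          · exact h2
          · exact absurd (Finset.mem_singleton.1 (Finsupp.support_single_subset h2)) hwne
        obtain ⟨hwch, hwsrc, hwtgt, hwγ, hwor⟩ :=
          substPoly_support_facts hαu hWlt τ v hβv.1.2 w hwE
        have hβw : β ∉ w := hwγ β hβv' hβu
        have hwnil : w ≠ [] := by
          intro h0
          subst h0
          have h3 : Q.src v = none := by rw [← hwsrc]; rfl
          exact hβv.1.1 (src_none.1 h3)
        refine ⟨⟨⟨hwnil, hwch⟩, by rw [hwsrc]; exact hβv.2.1,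
          by rw [hwtgt]; exact hβv.2.2.1,
          fun hh => hβw (hh ▸ List.mem_cons_self)⟩, ?_, hβw⟩
        rcases hwor with rfl | hlt
        · exact absurd rfl hwne
        · exact hlt
      set L₂ := R.support.toList.map fun w => (w, σ * R w) with hL₂
      refine ⟨[], L₂, by simp, ?_, ?_⟩
      · intro x hx
        rw [hL₂, List.mem_map] at hx
        obtain ⟨w, hw, rfl⟩ := hx
        rw [Finset.mem_toList] at hw
        exact ⟨(hfacts w hw).1, (hfacts w hw).2.1⟩
      · have hpn : substProd Q k α [] = 1 := rfl
        rw [hpn, one_mul]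
        refine isMulHomP_ext hmul3
          (isMulHomP_mul (substMap_isMulHomP Q k β v σ) (substProd_isMulHomP β L₂))
          fun γ => ?_
        rw [Module.End.mul_apply, Module.End.mul_apply, Module.End.mul_apply]
        have hER : E = Finsupp.single v 1 + R := by rw [hR]; abel
        have pβ : substProd Q k β L₂ (Finsupp.single [β] 1)
            = Finsupp.single [β] 1 + σ • R := by
          rw [hL₂]
          exact correction_eval R σ fun w hw => (hfacts w hw).2.2
        by_cases hγb : γ = β
        · subst hγb
          have b3 : substMap Q k α u (-τ) (Finsupp.single [γ] 1) = Finsupp.single [γ] 1 :=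
            substMap_arrow_ne _ _ (by exact fun hh => hne hh.symm)
          have b1 : substMap Q k α u τ (Finsupp.single [γ] 1) = Finsupp.single [γ] 1 :=
            substMap_arrow_ne _ _ (by exact fun hh => hne hh.symm)
          have a1v : substMap Q k α u τ (Finsupp.single v 1) = E := by
            rw [substMap_single, one_smul, hE]
          have hmapR : substMap Q k γ v σ R = R :=
            substMap_fixed _ _ _ _ fun p hp => (hfacts p hp).2.2
          simp only [b3, substMap_arrow_self, map_add, map_smul, b1, a1v, pβ, hmapR, hER]
          module
        · by_cases hγa : γ = α
          · subst hγa
            have a2γ : substMap Q k β v σ (Finsupp.single [γ] 1) = Finsupp.single [γ] 1 :=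
              substMap_arrow_ne _ _ hγb
            have a2u : substMap Q k β v σ (Finsupp.single u 1) = Finsupp.single u 1 :=
              substMap_fixed_single _ _ _ hβu
            have a1u : substMap Q k γ u τ (Finsupp.single u 1) = Finsupp.single u 1 :=
              substMap_fixed_single _ _ _ hαu'
            have pγ : substProd Q k β L₂ (Finsupp.single [γ] 1) = Finsupp.single [γ] 1 :=
              substProd_fixed_single L₂ 1 (by
                intro hh
                exact hγb (List.mem_singleton.1 hh).symm)
            simp only [substMap_arrow_self, map_add, map_smul, a2γ, a2u, a1u, pγ]
            module
          · have g3 : substMap Q k α u (-τ) (Finsupp.single [γ] 1) = Finsupp.single [γ] 1 :=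
              substMap_arrow_ne _ _ hγa
            have g2 : substMap Q k β v σ (Finsupp.single [γ] 1) = Finsupp.single [γ] 1 :=
              substMap_arrow_ne _ _ hγb
            have g1 : substMap Q k α u τ (Finsupp.single [γ] 1) = Finsupp.single [γ] 1 :=
              substMap_arrow_ne _ _ hγa
            have pγ : substProd Q k β L₂ (Finsupp.single [γ] 1) = Finsupp.single [γ] 1 :=
              substProd_fixed_single L₂ 1 (by
                intro hh
                exact hγb (List.mem_singleton.1 hh).symm)
            rw [g3, g2, g1, pγ, g2]

/-! ### Order lemmas -/

lemma isPath_single (a : Q.A) : Q.IsPath [a] := ⟨by simp, List.isChain_singleton a⟩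

lemma bplt_irrefl (o : Q.PathOrder) {b : Q.A × List Q.A} (hb : Q.IsBypass b.1 b.2) :
    ¬ o.bplt b b := by
  rintro (h | ⟨-, h⟩)
  · exact o.irrefl [b.1] (isPath_single b.1) h
  · exact o.irrefl b.2 hb.1 h

lemma bplt_trans {o : Q.PathOrder} {x y z : Q.A × List Q.A}
    (h1 : o.bplt x y) (h2 : o.bplt y z) : o.bplt x z := by
  rcases h1 with h1 | ⟨e1, h1⟩ <;> rcases h2 with h2 | ⟨e2, h2⟩
  · exact Or.inl (o.trans' _ _ _ h1 h2)
  · exact Or.inl (e2 ▸ h1)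
  · exact Or.inl (e1 ▸ h2)
  · exact Or.inr ⟨e1.trans e2, o.trans' _ _ _ h1 h2⟩

lemma bplt_of_bplt_of_bple {o : Q.PathOrder} {x y z : Q.A × List Q.A}
    (h1 : o.bplt x y) (h2 : o.bple y z) : o.bplt x z := by
  rcases h2 with h2 | rfl
  · exact bplt_trans h1 h2
  · exact h1

lemma bplt_of_bple_of_bplt {o : Q.PathOrder} {x y z : Q.A × List Q.A}
    (h1 : o.bple x y) (h2 : o.bplt y z) : o.bplt x z := by
  rcases h1 with h1 | rfl
  · exact bplt_trans h1 h2
  · exact h2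

/-! ### Membership of transvections in the subgroups -/

lemma tvE_mem_tlt {o : Q.PathOrder} {b : Q.A × List Q.A} {β : Q.A} {v : List Q.A}
    (hβv : Q.IsBypass β v) (h : β ∉ v) (hlt : o.bplt (β, v) b) (σ : k) :
    tvE β h σ ∈ TltSub Q k o b :=
  Subgroup.subset_closure ⟨β, v, σ, hβv, hlt, rfl⟩

lemma tvE_mem_tle {o : Q.PathOrder} {b : Q.A × List Q.A} {β : Q.A} {v : List Q.A}
    (hβv : Q.IsBypass β v) (h : β ∉ v) (hle : o.bple (β, v) b) (σ : k) :
    tvE β h σ ∈ TleSub Q k o b :=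
  Subgroup.subset_closure ⟨β, v, σ, hβv, hle, rfl⟩

lemma tlt_le_tle (o : Q.PathOrder) (b : Q.A × List Q.A) :
    TltSub Q k o b ≤ TleSub Q k o b := by
  refine Subgroup.closure_mono ?_
  rintro ψ ⟨β, v, τ, h1, h2, h3⟩
  exact ⟨β, v, τ, h1, Or.inl h2, h3⟩

lemma substProd_lift {o : Q.PathOrder} {b : Q.A × List Q.A} (hnc : Q.NoCycle) {α : Q.A}
    (L : List (List Q.A × k)) (hL : ∀ x ∈ L, Q.IsBypass α x.1 ∧ o.bplt (α, x.1) b) :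
    ∃ g ∈ TltSub Q k o b,
      (g : (List Q.A →₀ k) →ₗ[k] (List Q.A →₀ k)) = substProd Q k α L := by
  induction L with
  | nil => exact ⟨1, one_mem _, rfl⟩
  | cons x L ih =>
    obtain ⟨g, hg, hgc⟩ := ih fun y hy => hL y (List.mem_cons_of_mem _ hy)
    have hx := hL x (List.mem_cons_self)
    have hmem : α ∉ x.1 := bypass_not_mem hnc hx.1
    refine ⟨tvE α hmem x.2 * g, mul_mem (tvE_mem_tlt hx.1 hmem hx.2 x.2) hg, ?_⟩
    rw [coe_mulE, tvE_toLinearMap, hgc]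
    unfold substProd
    rw [List.map_cons, List.prod_cons, Module.End.mul_eq_comp]

lemma conj_gen_mem [Fintype Q.V] [Fintype Q.A] (hnc : Q.NoCycle) (hnm : Q.NoMultipleArrows)
    {o : Q.PathOrder} {b : Q.A × List Q.A} {α β : Q.A} {u v : List Q.A}
    (hαu : Q.IsBypass α u) (hβv : Q.IsBypass β v)
    (hd : o.bple (α, u) b) (hc : o.bplt (β, v) b) (τ σ : k)
    (h1 : α ∉ u) (h2 : β ∉ v) :
    tvE α h1 τ * tvE β h2 σ * (tvE α h1 τ)⁻¹ ∈ TltSub Q k o b := by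
  obtain ⟨L₁, L₂, hL₁, hL₂, heq⟩ := conj_formula hnc hnm hαu hβv τ σ
  have hL₁' : ∀ x ∈ L₁, Q.IsBypass α x.1 ∧ o.bplt (α, x.1) b := by
    intro x hx
    refine ⟨(hL₁ x hx).1, bplt_of_bplt_of_bple (y := (α, u)) (Or.inr ⟨rfl, ?_⟩) hd⟩
    exact o.wlt x.1 u (hL₁ x hx).1.1 hαu.1 (hL₁ x hx).2
  have hL₂' : ∀ x ∈ L₂, Q.IsBypass β x.1 ∧ o.bplt (β, x.1) b := by
    intro x hx
    refine ⟨(hL₂ x hx).1, bplt_trans (y := (β, v)) (Or.inr ⟨rfl, ?_⟩) hc⟩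
    exact o.wlt x.1 v (hL₂ x hx).1.1 hβv.1 (hL₂ x hx).2
  obtain ⟨g₁, hg₁, hc₁⟩ := substProd_lift hnc L₁ hL₁'
  obtain ⟨g₂, hg₂, hc₂⟩ := substProd_lift hnc L₂ hL₂'
  have key : tvE α h1 τ * tvE β h2 σ * (tvE α h1 τ)⁻¹ = g₁ * (tvE β h2 σ * g₂) := by
    apply LinearEquiv.toLinearMap_injective
    rw [coe_mulE, coe_mulE, tvE_inv, tvE_toLinearMap, tvE_toLinearMap, tvE_toLinearMap,
      coe_mulE, coe_mulE, hc₁, hc₂, tvE_toLinearMap, ← Module.End.mul_eq_comp,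
      ← Module.End.mul_eq_comp, ← Module.End.mul_eq_comp, ← Module.End.mul_eq_comp]
    exact heq
  rw [key]
  exact mul_mem hg₁ (mul_mem (tvE_mem_tlt hβv h2 hc σ) hg₂)

lemma conj_mem_tlt [Fintype Q.V] [Fintype Q.A] (hnc : Q.NoCycle) (hnm : Q.NoMultipleArrows)
    {o : Q.PathOrder} {b : Q.A × List Q.A} {α : Q.A} {u : List Q.A}
    (hαu : Q.IsBypass α u) (hd : o.bple (α, u) b) (τ : k) (h1 : α ∉ u)
    {x : (List Q.A →₀ k) ≃ₗ[k] (List Q.A →₀ k)} (hx : x ∈ TltSub Q k o b) :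
    tvE α h1 τ * x * (tvE α h1 τ)⁻¹ ∈ TltSub Q k o b := by
  set g := tvE α h1 τ with hg
  refine Subgroup.closure_induction ?_ ?_ ?_ ?_ hx
  · rintro ψ ⟨β, v, σ, hbv, hlt, htr⟩
    have hβv' : β ∉ v := bypass_not_mem hnc hbv
    obtain rfl : ψ = tvE β hβv' σ := (isTransvectionE_iff hβv' σ).1 htr
    exact conj_gen_mem hnc hnm hαu hbv hd hlt τ σ h1 hβv'
  · simpa using one_mem (TltSub Q k o b)
  · intro x y _ _ hx hy
    have : g * (x * y) * g⁻¹ = (g * x * g⁻¹) * (g * y * g⁻¹) := by group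
    rw [this]
    exact mul_mem hx hy
  · intro x _ hx
    have : g * x⁻¹ * g⁻¹ = (g * x * g⁻¹)⁻¹ := by group
    rw [this]
    exact inv_mem hx


lemma tlt_conj_aux [Fintype Q.V] [Fintype Q.A] (hnc : Q.NoCycle) (hnm : Q.NoMultipleArrows)
    {o : Q.PathOrder} {b : Q.A × List Q.A} :
    ∀ g ∈ TleSub Q k o b, ∀ x ∈ TltSub Q k o b,
      g * x * g⁻¹ ∈ TltSub Q k o b ∧ g⁻¹ * x * g ∈ TltSub Q k o b := by
  intro g hg
  refine Subgroup.closure_induction (p := fun g _ => ∀ x ∈ TltSub Q k o b,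
    g * x * g⁻¹ ∈ TltSub Q k o b ∧ g⁻¹ * x * g ∈ TltSub Q k o b) ?_ ?_ ?_ ?_ hg
  · rintro ψ ⟨β, v, σ, hbv, hle, htr⟩ x hx
    have h' : β ∉ v := bypass_not_mem hnc hbv
    obtain rfl : ψ = tvE β h' σ := (isTransvectionE_iff h' σ).1 htr
    constructor
    · exact conj_mem_tlt hnc hnm hbv hle σ h' hx
    · have e : (tvE β h' σ)⁻¹ * x * tvE β h' σ
          = tvE β h' (-σ) * x * (tvE β h' (-σ))⁻¹ := by
        rw [tvE_inv, tvE_inv, neg_neg]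
      rw [e]
      exact conj_mem_tlt hnc hnm hbv hle (-σ) h' hx
  · intro x hx
    constructor <;> simpa using hx
  · intro g₁ g₂ _ _ hg₁ hg₂ x hx
    constructor
    · have e : g₁ * g₂ * x * (g₁ * g₂)⁻¹ = g₁ * (g₂ * x * g₂⁻¹) * g₁⁻¹ := by group
      rw [e]
      exact (hg₁ _ ((hg₂ x hx).1)).1
    · have e : (g₁ * g₂)⁻¹ * x * (g₁ * g₂) = g₂⁻¹ * (g₁⁻¹ * x * g₁) * g₂ := by group
      rw [e]
      exact (hg₂ _ ((hg₁ x hx).2)).2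
  · intro g₁ _ hg₁ x hx
    refine ⟨(hg₁ x hx).2, ?_⟩
    have e : (g₁⁻¹)⁻¹ * x * g₁⁻¹ = g₁ * x * g₁⁻¹ := by group
    rw [e]
    exact (hg₁ x hx).1

lemma tlt_conj [Fintype Q.V] [Fintype Q.A] (hnc : Q.NoCycle) (hnm : Q.NoMultipleArrows)
    {o : Q.PathOrder} {b : Q.A × List Q.A} :
    ∀ g ∈ TleSub Q k o b, ∀ x ∈ TltSub Q k o b, g * x * g⁻¹ ∈ TltSub Q k o b :=
  fun g hg x hx => (tlt_conj_aux hnc hnm g hg x hx).1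

lemma tle_decomp [Fintype Q.V] [Fintype Q.A] (hnc : Q.NoCycle) (hnm : Q.NoMultipleArrows)
    (o : Q.PathOrder) {b : Q.A × List Q.A} (hb : Q.IsBypass b.1 b.2)
    (ψ : (List Q.A →₀ k) ≃ₗ[k] (List Q.A →₀ k)) :
    ψ ∈ TleSub Q k o b ↔
      ∃ x ∈ TsingleSet Q k b, ∃ y ∈ TltSub Q k o b, ψ = x * y := by
  have hb' : b.1 ∉ b.2 := bypass_not_mem hnc hb
  constructor
  · intro hψ
    let P : Subgroup ((List Q.A →₀ k) ≃ₗ[k] (List Q.A →₀ k)) :=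
      { carrier := {ψ | ∃ x ∈ TsingleSet Q k b, ∃ y ∈ TltSub Q k o b, ψ = x * y}
        one_mem' := ⟨tvE b.1 hb' 0, ⟨0, isTransvectionE_tvE b.1 hb' 0⟩, 1, one_mem _,
          by rw [tvE_zero, mul_one]⟩
        mul_mem' := by
          rintro A A' ⟨x, ⟨τ₁, hx⟩, y, hy, rfl⟩ ⟨x', ⟨τ₂, hx'⟩, y', hy', rfl⟩
          obtain rfl : x = tvE b.1 hb' τ₁ := (isTransvectionE_iff hb' τ₁).1 hx
          obtain rfl : x' = tvE b.1 hb' τ₂ := (isTransvectionE_iff hb' τ₂).1 hx'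
          have hz : (tvE b.1 hb' τ₂)⁻¹ * y * ((tvE b.1 hb' τ₂)⁻¹)⁻¹ ∈ TltSub Q k o b :=
            tlt_conj hnc hnm _ (inv_mem (tvE_mem_tle hb hb' (Or.inr Prod.mk.eta) τ₂)) y hy
          refine ⟨tvE b.1 hb' (τ₁ + τ₂), ⟨τ₁ + τ₂, isTransvectionE_tvE _ _ _⟩,
            ((tvE b.1 hb' τ₂)⁻¹ * y * ((tvE b.1 hb' τ₂)⁻¹)⁻¹) * y',
            mul_mem hz hy', ?_⟩
          rw [← tvE_mul]
          group
        inv_mem' := by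
          rintro A ⟨x, ⟨τ₁, hx⟩, y, hy, rfl⟩
          obtain rfl : x = tvE b.1 hb' τ₁ := (isTransvectionE_iff hb' τ₁).1 hx
          have hz : tvE b.1 hb' τ₁ * y⁻¹ * (tvE b.1 hb' τ₁)⁻¹ ∈ TltSub Q k o b :=
            tlt_conj hnc hnm _ (tvE_mem_tle hb hb' (Or.inr Prod.mk.eta) τ₁) y⁻¹ (inv_mem hy)
          refine ⟨tvE b.1 hb' (-τ₁), ⟨-τ₁, isTransvectionE_tvE _ _ _⟩,
            tvE b.1 hb' τ₁ * y⁻¹ * (tvE b.1 hb' τ₁)⁻¹, hz, ?_⟩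
          rw [← tvE_inv]
          group }
    refine (Subgroup.closure_le P).2 ?_ hψ
    rintro φ ⟨β, v, τ, hbv, hle, htr⟩
    have h' : β ∉ v := bypass_not_mem hnc hbv
    obtain rfl : φ = tvE β h' τ := (isTransvectionE_iff h' τ).1 htr
    rcases hle with hlt | heq
    · exact ⟨tvE b.1 hb' 0, ⟨0, isTransvectionE_tvE _ _ _⟩, tvE β h' τ,
        tvE_mem_tlt hbv h' hlt τ, by rw [tvE_zero, one_mul]⟩
    · refine ⟨tvE β h' τ, ⟨τ, ?_⟩, 1, one_mem _, by rw [mul_one]⟩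
      have h1 : β = b.1 := congrArg Prod.fst heq
      have h2 : v = b.2 := congrArg Prod.snd heq
      subst h1; subst h2
      exact isTransvectionE_tvE _ _ _
  · rintro ⟨x, ⟨τ, hx⟩, y, hy, rfl⟩
    have hxm : x ∈ TleSub Q k o b :=
      Subgroup.subset_closure ⟨b.1, b.2, τ, hb, Or.inr Prod.mk.eta, hx⟩
    exact mul_mem hxm (tlt_le_tle o b hy)

lemma range_succ_prod {G : Type*} [Monoid G] (g : ℕ → G) (n : ℕ) :
    (((List.range (n + 1)).map g).reverse).prod
      = g n * (((List.range n).map g).reverse).prod := by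
  rw [List.range_succ, List.map_append, List.reverse_append]
  simp

end Dev

/-- For any bypass `(α,u)`, `T_{<(α,u)}` is a normal subgroup of
`T_{≤(α,u)}`.  Moreover, if `(a_1,v_1) < ⋯ < (a_N,v_N)` is the increasing sequence of
all bypasses in `Q` (indexed here by `0,…,N-1`), then `T_{<(a_1,v_1)}` is trivial,
`T_{<(a_i,v_i)} = T_{≤(a_{i-1},v_{i-1})}` for `i ≥ 2`, and
`T_{≤(a_i,v_i)} = T_{(a_i,v_i)} T_{(a_{i-1},v_{i-1})} ⋯ T_{(a_1,v_1)}` for every `i`. -/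
theorem stmt_13 (Q : Quiv) [Fintype Q.V] [Fintype Q.A]
    (k : Type) [Field k] [IsAlgClosed k]
    (hnc : Q.NoCycle) (hnm : Q.NoMultipleArrows) (o : Q.PathOrder)
    (N : ℕ) (a : ℕ → Q.A) (v : ℕ → List Q.A)
    (hb : ∀ i < N, Q.IsBypass (a i) (v i))
    (hmono : ∀ i j, i < j → j < N → o.bplt (a i, v i) (a j, v j))
    (hall : ∀ (β : Q.A) (w : List Q.A), Q.IsBypass β w → ∃ i < N, a i = β ∧ v i = w) :
    (∀ (β : Q.A) (w : List Q.A), Q.IsBypass β w →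
      TltSub Q k o (β, w) ≤ TleSub Q k o (β, w) ∧
      ∀ g ∈ TleSub Q k o (β, w), ∀ x ∈ TltSub Q k o (β, w),
        g * x * g⁻¹ ∈ TltSub Q k o (β, w)) ∧
    (1 ≤ N → TltSub Q k o (a 0, v 0) = ⊥) ∧
    (∀ i, 1 ≤ i → i < N → TltSub Q k o (a i, v i) = TleSub Q k o (a (i - 1), v (i - 1))) ∧
    (∀ i < N, (TleSub Q k o (a i, v i) : Set ((List Q.A →₀ k) ≃ₗ[k] (List Q.A →₀ k))) =
      {ψ | ∃ g : ℕ → ((List Q.A →₀ k) ≃ₗ[k] (List Q.A →₀ k)),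
        (∀ j ≤ i, g j ∈ TsingleSet Q k (a j, v j)) ∧
        ψ = (((List.range (i + 1)).map g).reverse).prod}) := by
  classical
  have horder : ∀ j i, j < N → i < N → (o.bplt (a j, v j) (a i, v i) ↔ j < i) := by
    intro j i hj hi
    constructor
    · intro h
      by_contra hji
      push_neg at hji
      rcases eq_or_lt_of_le hji with rfl | hlt
      · exact bplt_irrefl o (hb i hi) h
      · exact bplt_irrefl o (hb i hi) (bplt_trans (hmono i j hlt hj) h)
    · intro h
      exact hmono j i h hi
  have hbot : 1 ≤ N → TltSub Q k o (a 0, v 0) = ⊥ := by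
    intro hN
    apply le_antisymm _ bot_le
    refine (Subgroup.closure_le _).2 ?_
    rintro ψ ⟨β, w, τ, hbw, hlt, htr⟩
    exfalso
    obtain ⟨i, hi, hai, hvi⟩ := hall β w hbw
    have h2 : o.bplt (a i, v i) (a 0, v 0) := by rw [hai, hvi]; exact hlt
    have hlt0 := (horder i 0 hi (by omega)).1 h2
    omega
  have hstep : ∀ i, 1 ≤ i → i < N →
      TltSub Q k o (a i, v i) = TleSub Q k o (a (i - 1), v (i - 1)) := by
    intro i h1 hiN
    have hgens : {ψ : (List Q.A →₀ k) ≃ₗ[k] (List Q.A →₀ k) |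
        ∃ β w τ, Q.IsBypass β w ∧ o.bplt (β, w) (a i, v i) ∧ IsTransvectionE Q k ψ β w τ}
        = {ψ | ∃ β w τ, Q.IsBypass β w ∧ o.bple (β, w) (a (i-1), v (i-1)) ∧
            IsTransvectionE Q k ψ β w τ} := by
      ext ψ
      constructor
      · rintro ⟨β, w, τ, hbw, hlt, htr⟩
        obtain ⟨j, hj, haj, hvj⟩ := hall β w hbw
        have hlt' : o.bplt (a j, v j) (a i, v i) := by rw [haj, hvj]; exact hlt
        have hji := (horder j i hj hiN).1 hlt'
        refine ⟨β, w, τ, hbw, ?_, htr⟩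
        rcases lt_or_eq_of_le (by omega : j ≤ i - 1) with hlt2 | heq2
        · left
          have h3 := hmono j (i-1) hlt2 (by omega)
          rw [haj, hvj] at h3
          exact h3
        · right
          rw [← heq2, haj, hvj]
      · rintro ⟨β, w, τ, hbw, hle, htr⟩
        exact ⟨β, w, τ, hbw, bplt_of_bple_of_bplt hle (hmono (i-1) i (by omega) hiN), htr⟩
    unfold TltSub TleSub
    rw [hgens]
  refine ⟨fun β w hbw => ⟨tlt_le_tle o (β, w), tlt_conj hnc hnm⟩, hbot, hstep, ?_⟩
  intro i
  induction i with
  | zero =>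
    intro hiN
    ext ψ
    simp only [SetLike.mem_coe, Set.mem_setOf_eq]
    rw [tle_decomp hnc hnm o (hb 0 hiN) ψ]
    constructor
    · rintro ⟨x, hx, y, hy, rfl⟩
      rw [hbot hiN] at hy
      obtain rfl : y = 1 := Subgroup.mem_bot.1 hy
      refine ⟨fun _ => x, fun j hj => by obtain rfl : j = 0 := Nat.le_zero.1 hj; exact hx, ?_⟩
      rw [range_succ_prod]
      simp
    · rintro ⟨g, hg, rfl⟩
      refine ⟨g 0, hg 0 le_rfl, 1, one_mem _, ?_⟩
      rw [range_succ_prod]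
      simp
  | succ n ih =>
    intro hiN
    have ihn := ih (by omega)
    have heq3 := hstep (n+1) (by omega) hiN
    simp only [Nat.add_sub_cancel] at heq3
    ext ψ
    simp only [SetLike.mem_coe, Set.mem_setOf_eq]
    rw [tle_decomp hnc hnm o (hb (n+1) hiN) ψ]
    constructor
    · rintro ⟨x, hx, y, hy, rfl⟩
      rw [heq3] at hy
      have hyS : y ∈ {ψ : (List Q.A →₀ k) ≃ₗ[k] (List Q.A →₀ k) |
          ∃ g : ℕ → ((List Q.A →₀ k) ≃ₗ[k] (List Q.A →₀ k)),
            (∀ j ≤ n, g j ∈ TsingleSet Q k (a j, v j)) ∧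
            ψ = (((List.range (n + 1)).map g).reverse).prod} := by
        rw [← ihn]
        exact hy
      obtain ⟨g', hg', hy'⟩ := hyS
      refine ⟨fun j => if j = n + 1 then x else g' j, ?_, ?_⟩
      · intro j hj
        by_cases hj2 : j = n + 1
        · subst hj2
          simpa using hx
        · have : j ≤ n := by omega
          simpa [hj2] using hg' j this
      · rw [range_succ_prod, if_pos rfl]
        have hmapeq : (List.range (n+1)).map (fun j => if j = n + 1 then x else g' j)
            = (List.range (n+1)).map g' := by
          refine List.map_congr_left fun j hj => ?_
          have : j < n + 1 := List.mem_range.1 hj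
          rw [if_neg (by omega)]
        rw [hmapeq, ← hy']
    · rintro ⟨g, hg, rfl⟩
      rw [range_succ_prod]
      refine ⟨g (n+1), hg (n+1) le_rfl, (((List.range (n+1)).map g).reverse).prod, ?_, rfl⟩
      rw [heq3, ← SetLike.mem_coe, ihn]
      exact ⟨g, fun j hj => hg j (by omega), rfl⟩


end Quiv
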